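/- arXiv:2412.16154 — 12 statements merged into one kernel-verified Lean document; each statement's English description precedes it below -/
import Mathlib

section
/- For A = {0,3,5,6} and all h ≥ 2, the h-fold sumset satisfies hA = {0,3,5,6} ∪ [8, 6h], where [8,6h] is the interval of integers from 8 to 6h; consequently |hA| = 6h - 3 for all h ≥ 2. -/
open Pointwise

/-- The h-fold sumset of a finite set of integers. -/
def hfold (A : Finset ℤ) : ℕ → Finset ℤ
  | 0 => {0}
  | n + 1 => A + hfold A n

lemma hfold_eq (h : ℕ) (hh : 2 ≤ h) :
    hfold {0, 3, 5, 6} h = ({0, 3, 5, 6} : Finset ℤ) ∪ Finset.Icc 8 (6 * h) := by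
  induction h, hh using Nat.le_induction with
  | base => decide
  | succ n hn ih =>
    show ({0, 3, 5, 6} : Finset ℤ) + hfold {0, 3, 5, 6} n = _
    rw [ih]
    ext x
    simp only [Finset.mem_add, Finset.mem_union, Finset.mem_insert, Finset.mem_Icc,
      Finset.mem_singleton]
    constructor
    · rintro ⟨a, ha, b, hb, rfl⟩
      push_cast
      omega
    · intro hx
      push_cast at hx ⊢
      by_cases h1 : x = 0 ∨ x = 3 ∨ x = 5 ∨ x = 6
      · exact ⟨0, by omega, x, by omega, by omega⟩
      by_cases h2 : x ≤ 6 * (n : ℤ)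
      · exact ⟨0, by omega, x, by omega, by omega⟩
      by_cases h3 : 14 ≤ x
      · exact ⟨6, by omega, x - 6, by omega, by omega⟩
      · exact ⟨5, by omega, x - 5, by omega, by omega⟩

theorem stmt_3 (h : ℕ) (hh : 2 ≤ h) :
    hfold {0, 3, 5, 6} h = ({0, 3, 5, 6} : Finset ℤ) ∪ Finset.Icc 8 (6 * h) ∧
    (hfold {0, 3, 5, 6} h).card = 6 * h - 3 := by
  refine ⟨hfold_eq h hh, ?_⟩
  rw [hfold_eq h hh, Finset.card_union_of_disjoint, Int.card_Icc]
  · have : (4 : ℕ) = ({0, 3, 5, 6} : Finset ℤ).card := by decide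
    omega
  · rw [Finset.disjoint_left]
    intro a ha ha'
    simp only [Finset.mem_insert, Finset.mem_singleton] at ha
    simp only [Finset.mem_Icc] at ha'
    omega
end

section
/- For B = {0,4,5,6} and all h ≥ 2, the h-fold sumset satisfies hB = {0,4,5,6} ∪ [8, 6h]; consequently |hB| = 6h - 3 for all h ≥ 2. -/
open Pointwise

lemma step_lemma (h : ℕ) (hh : 2 ≤ h) :
    ({0, 4, 5, 6} : Finset ℤ) + (({0, 4, 5, 6} : Finset ℤ) ∪ Finset.Icc 8 (6 * h))
      = ({0, 4, 5, 6} : Finset ℤ) ∪ Finset.Icc 8 (6 * h + 6) := by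
  have hh' : (2:ℤ) ≤ (h:ℤ) := by exact_mod_cast hh
  ext x
  simp only [Finset.mem_add, Finset.mem_union, Finset.mem_insert, Finset.mem_singleton,
    Finset.mem_Icc]
  constructor
  · rintro ⟨a, ha, b, hb, rfl⟩
    rcases ha with rfl|rfl|rfl|rfl <;> rcases hb with (rfl|rfl|rfl|rfl)|⟨h1,h2⟩ <;> omega
  · intro hx
    rcases hx with (rfl|rfl|rfl|rfl)|⟨h1,h2⟩
    · exact ⟨0, by norm_num, 0, by norm_num, by ring⟩
    · exact ⟨4, by norm_num, 0, by norm_num, by ring⟩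
    · exact ⟨5, by norm_num, 0, by norm_num, by ring⟩
    · exact ⟨6, by norm_num, 0, by norm_num, by ring⟩
    · rcases le_or_gt x (6*(h:ℤ)) with hc|hc
      · exact ⟨0, by norm_num, x, Or.inr ⟨h1, hc⟩, by ring⟩
      · rcases le_or_gt x (6*(h:ℤ)+3) with hc2|hc2
        · exact ⟨x - (6*(h:ℤ)-3), by omega, 6*(h:ℤ)-3, Or.inr ⟨by omega, by omega⟩, by ring⟩
        · exact ⟨x - 6*(h:ℤ), by omega, 6*(h:ℤ), Or.inr ⟨by omega, by omega⟩, by ring⟩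

theorem stmt_4 (h : ℕ) (hh : 2 ≤ h) :
    hfold {0, 4, 5, 6} h = ({0, 4, 5, 6} : Finset ℤ) ∪ Finset.Icc 8 (6 * h) ∧
    (hfold {0, 4, 5, 6} h).card = 6 * h - 3 := by
  have main : hfold {0, 4, 5, 6} h
      = ({0, 4, 5, 6} : Finset ℤ) ∪ Finset.Icc 8 (6 * h) := by
    induction h, hh using Nat.le_induction with
    | base => decide
    | succ n hn ih =>
      show ({0, 4, 5, 6} : Finset ℤ) + hfold {0, 4, 5, 6} n = _
      rw [ih, step_lemma n hn]
      congr 1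
  refine ⟨main, ?_⟩
  rw [main]
  have hdisj : Disjoint ({0, 4, 5, 6} : Finset ℤ) (Finset.Icc 8 (6 * h)) := by
    rw [Finset.disjoint_left]
    intro a ha hb
    simp only [Finset.mem_insert, Finset.mem_singleton] at ha
    simp only [Finset.mem_Icc] at hb
    omega
  rw [Finset.card_union_of_disjoint hdisj, Int.card_Icc]
  have hh' : (2:ℤ) ≤ (h:ℤ) := by exact_mod_cast hh
  have : (({0,4,5,6} : Finset ℤ)).card = 4 := by decide
  rw [this]
  omega
end

section
/- For every integer k ≥ 3, there exist finite sets of integers A and B with |A| = |B| = k that are not affinely equivalent but satisfy |hA| = |hB| for all h ≥ 1. -/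
open Pointwise

/-- A and B are affinely equivalent: B = {λx + μ : x ∈ A} for rationals λ ≠ 0, μ. -/
def AffinelyEquivalent (A B : Finset ℤ) : Prop :=
  ∃ lam mu : ℚ, lam ≠ 0 ∧
    B.image (fun x : ℤ => (x : ℚ)) = A.image (fun x : ℤ => lam * (x : ℚ) + mu)

/-!
For `k ≥ 6` take `A = [0, k] \ {2}` and `B = [0, k] \ {3}`: both have `k` elements and
`hA = hB = [0, hk]` for every `h ≥ 2`, while an affine map between two subsets of `[0, k]`
containing both endpoints must be the identity or the reflection `x ↦ k - x`.
For `k = 5` this pair is a reflection, so `k = 3, 4, 5` are settled by the explicit pairs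
`{0,1,5}, {0,2,5}`, `{0,1,2,5}, {0,2,4,5}` and `{0,1,2,6,8}, {0,1,4,6,8}`.
For the first two, `hA` and `hB` are, from small `h` on, the interval `[0, 5h]` with a fixed
set of gaps near each end, and the two pairs of gap sets have equal total size.
For the last pair the `h`-fold sumsets coincide for `h ≥ 3`, because `3A = 3B` and `4A = 4B`.
-/

open Finset

theorem hfold_eq_nsmul (A : Finset ℤ) (n : ℕ) : hfold A n = n • A := by
  induction n with
  | zero => rfl
  | succ n ih => rw [hfold, ih, succ_nsmul']

theorem mem_add_iff_exists_sub {G : Type*} [AddCommGroup G] [DecidableEq G] {s t : Finset G}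
    {x : G} : x ∈ s + t ↔ ∃ a ∈ s, x - a ∈ t := by
  simp only [mem_add, ← eq_sub_iff_add_eq', exists_eq_right]

theorem nsmul_eq_of_nsmul_eq_of_succ_nsmul_eq {M : Type*} [AddCommMonoid M] {a b : M} {n : ℕ}
    (h₀ : n • a = n • b) (h₁ : (n + 1) • a = (n + 1) • b) {h : ℕ} (hn : n ≤ h) :
    h • a = h • b := by
  have hab : a + n • b = b + n • b := by rwa [succ_nsmul', succ_nsmul', h₀] at h₁
  have key : ∀ j : ℕ, j • a + n • b = j • b + n • b := by
    intro j
    induction j with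
    | zero => simp only [zero_nsmul]
    | succ j ih =>
      calc (j + 1) • a + n • b = j • a + (a + n • b) := by rw [succ_nsmul, add_assoc]
        _ = b + (j • a + n • b) := by rw [hab]; abel
        _ = (j + 1) • b + n • b := by rw [ih, succ_nsmul]; abel
  obtain ⟨j, rfl⟩ := Nat.exists_eq_add_of_le' hn
  rw [add_nsmul, add_nsmul, h₀, key]

theorem add_Icc_zero_eq_Icc {A : Finset ℤ} {m n : ℤ} (hA : A ⊆ Icc 0 m) (h0 : 0 ∈ A)
    (hm : m ∈ A) (hmn : m ≤ n) : A + Icc 0 n = Icc 0 (n + m) := by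
  ext x
  simp only [mem_add_iff_exists_sub, mem_Icc]
  constructor
  · rintro ⟨a, ha, hxa⟩
    have := mem_Icc.1 (hA ha)
    omega
  · intro hx
    by_cases hxn : x ≤ n
    · exact ⟨0, h0, by omega⟩
    · exact ⟨m, hm, by omega⟩

/-- `[0, N]` minus the gaps `L` near `0` and `N - R` near `N`. By Nathanson's structure theorem,
`hA` has this shape with `N = h * max A` for all large `h` when `0 = min A` and `gcd A = 1`. -/
noncomputable def trimmedIcc (N : ℤ) (L R : Finset ℤ) : Finset ℤ :=
  Icc 0 N \ (L ∪ R.image (N - ·))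

theorem mem_trimmedIcc {N x : ℤ} {L R : Finset ℤ} :
    x ∈ trimmedIcc N L R ↔ 0 ≤ x ∧ x ≤ N ∧ x ∉ L ∧ N - x ∉ R := by
  simp only [trimmedIcc, mem_sdiff, mem_Icc, mem_union, mem_image, not_or, not_exists, not_and]
  constructor
  · rintro ⟨⟨h0, hN⟩, hL, hR⟩
    exact ⟨h0, hN, hL, fun hx => hR _ hx (by ring)⟩
  · rintro ⟨h0, hN, hL, hR⟩
    exact ⟨⟨h0, hN⟩, hL, fun r hr hx => hR (by rw [← hx]; simpa using hr)⟩

theorem card_trimmedIcc {N c : ℤ} {L R : Finset ℤ} (hL : L ⊆ Ico 0 c) (hR : R ⊆ Ico 0 c)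
    (hc : 0 ≤ c) (hcN : 2 * c ≤ N + 1) : (#(trimmedIcc N L R) : ℤ) = N + 1 - #L - #R := by
  have hsub : L ∪ R.image (N - ·) ⊆ Icc 0 N := by
    refine union_subset (fun x hx => ?_) (fun x hx => ?_)
    · have := mem_Ico.1 (hL hx); rw [mem_Icc]; omega
    · obtain ⟨r, hr, rfl⟩ := mem_image.1 hx
      have := mem_Ico.1 (hR hr); rw [mem_Icc]; omega
  have hdisj : Disjoint L (R.image (N - ·)) := by
    refine disjoint_left.2 fun x hx hx' => ?_
    obtain ⟨r, hr, rfl⟩ := mem_image.1 hx'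
    have := mem_Ico.1 (hL hx); have := mem_Ico.1 (hR hr); omega
  have hcard := congrArg (Nat.cast (R := ℤ)) (card_sdiff_add_card_eq_card hsub)
  rw [card_union_of_disjoint hdisj, card_image_of_injective _ sub_right_injective] at hcard
  push_cast at hcard
  have hIcc := Int.card_Icc_of_le (a := 0) (b := N) (by omega)
  rw [trimmedIcc]
  omega

theorem affine_self_map_Icc_cases {m lam mu a₀ a₁ : ℚ} (hm : 0 < m)
    (hmu₀ : 0 ≤ mu) (hmu₁ : mu ≤ m) (hlm₀ : 0 ≤ lam * m + mu) (hlm₁ : lam * m + mu ≤ m)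
    (ha₀ : 0 ≤ a₀ ∧ a₀ ≤ m) (ha₁ : 0 ≤ a₁ ∧ a₁ ≤ m)
    (h₀ : lam * a₀ + mu = 0) (h₁ : lam * a₁ + mu = m) :
    lam = 1 ∧ mu = 0 ∨ lam = -1 ∧ mu = m := by
  -- `0, m ↦ [0, m]` forces `|lam| ≤ 1`, and `a₀, a₁ ∈ [0, m] ↦ 0, m` forces `|lam| ≥ 1`
  have hspan : lam * (a₁ - a₀) = m := by linarith
  rcases lt_trichotomy lam 0 with hneg | rfl | hpos
  · have hlam : lam = -1 := by nlinarith
    subst hlam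
    exact Or.inr ⟨rfl, by linarith⟩
  · linarith
  · have hlam : lam = 1 := by nlinarith
    subst hlam
    exact Or.inl ⟨rfl, by linarith⟩

theorem not_affinelyEquivalent_of_subset_Icc {A B : Finset ℤ} {m : ℤ} (hm : 0 < m)
    (hA : A ⊆ Icc 0 m) (hB : B ⊆ Icc 0 m) (h0A : 0 ∈ A) (hmA : m ∈ A) (h0B : 0 ∈ B)
    (hmB : m ∈ B) (hBA : B ≠ A) (hBA' : B ≠ A.image (m - ·)) : ¬ AffinelyEquivalent A B := by
  rintro ⟨lam, mu, -, heq⟩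
  have hmaps : ∀ a ∈ A, ∃ b ∈ B, (b : ℚ) = lam * a + mu := fun a ha => by
    have := mem_image_of_mem (fun x : ℤ => lam * (x : ℚ) + mu) ha
    rw [← heq] at this
    simpa [eq_comm] using this
  have honto : ∀ b ∈ B, ∃ a ∈ A, lam * a + mu = (b : ℚ) := fun b hb => by
    simpa [heq] using mem_image_of_mem (fun x : ℤ => (x : ℚ)) hb
  have hbounds : ∀ x ∈ Icc 0 m, (0 : ℚ) ≤ x ∧ (x : ℚ) ≤ m := fun x hx => by
    obtain ⟨h0, hm⟩ := mem_Icc.1 hx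
    exact ⟨by exact_mod_cast h0, by exact_mod_cast hm⟩
  obtain ⟨b₀, hb₀, hmu⟩ := hmaps 0 h0A
  obtain ⟨b₁, hb₁, hlm⟩ := hmaps m hmA
  obtain ⟨a₀, ha₀, h₀⟩ := honto 0 h0B
  obtain ⟨a₁, ha₁, h₁⟩ := honto m hmB
  rw [Int.cast_zero, mul_zero, zero_add] at hmu
  obtain ⟨hb₀0, hb₀m⟩ := hbounds b₀ (hB hb₀)
  obtain ⟨hb₁0, hb₁m⟩ := hbounds b₁ (hB hb₁)
  rcases affine_self_map_Icc_cases (m := m) (by exact_mod_cast hm) (hmu ▸ hb₀0) (hmu ▸ hb₀m)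
      (hlm ▸ hb₁0) (hlm ▸ hb₁m) (hbounds a₀ (hA ha₀)) (hbounds a₁ (hA ha₁))
      (by simpa using h₀) h₁ with ⟨rfl, rfl⟩ | ⟨rfl, rfl⟩
  · refine hBA (image_injective (Int.cast_injective (α := ℚ)) ?_)
    simp [heq]
  · refine hBA' (image_injective (Int.cast_injective (α := ℚ)) ?_)
    rw [heq, image_image]
    refine image_congr fun x _ => ?_
    simp only [Function.comp, Int.cast_sub]
    ring

theorem erase_Icc_add_self {m t : ℤ} (ht : 2 ≤ t) (htm : t + 2 ≤ m) :
    (Icc 0 m).erase t + (Icc 0 m).erase t = Icc 0 (2 * m) := by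
  ext x
  simp only [mem_add_iff_exists_sub, mem_erase, mem_Icc]
  constructor
  · rintro ⟨a, ha, hxa⟩
    omega
  · intro hx
    by_cases hxt : x = t
    · exact ⟨1, by omega, by omega⟩
    by_cases hxm : x ≤ m
    · exact ⟨x, by omega, by omega⟩
    by_cases hxmt : x = m + t
    · exact ⟨m - 1, by omega, by omega⟩
    · exact ⟨m, by omega, by omega⟩

theorem hfold_erase_Icc {m t : ℤ} (ht : 2 ≤ t) (htm : t + 2 ≤ m) {n : ℕ} (hn : 2 ≤ n) :
    hfold ((Icc 0 m).erase t) n = Icc 0 (n * m) := by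
  induction n, hn using Nat.le_induction with
  | base => rw [hfold_eq_nsmul, two_nsmul, erase_Icc_add_self ht htm]; norm_num
  | succ n hn ih =>
    rw [hfold, ih, add_Icc_zero_eq_Icc (erase_subset t _) (by simp; omega) (by simp; omega)
      (by nlinarith)]
    push_cast
    ring_nf

theorem card_hfold_erase_Icc_eq {m t t' : ℤ} (ht : 2 ≤ t) (htm : t + 2 ≤ m) (ht' : 2 ≤ t')
    (htm' : t' + 2 ≤ m) (n : ℕ) :
    #(hfold ((Icc 0 m).erase t) n) = #(hfold ((Icc 0 m).erase t') n) := by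
  rcases lt_or_ge n 2 with hn | hn
  · interval_cases n
    · rfl
    · rw [hfold_eq_nsmul, hfold_eq_nsmul, one_nsmul, one_nsmul,
        card_erase_of_mem (by simp; omega), card_erase_of_mem (by simp; omega)]
  · rw [hfold_erase_Icc ht htm hn, hfold_erase_Icc ht' htm' hn]

theorem not_affinelyEquivalent_erase_Icc {m : ℤ} (hm : 6 ≤ m) :
    ¬ AffinelyEquivalent ((Icc 0 m).erase 2) ((Icc 0 m).erase 3) := by
  refine not_affinelyEquivalent_of_subset_Icc (m := m) (by omega) (erase_subset _ _)
    (erase_subset _ _) (by simp; omega) (by simp; omega) (by simp; omega) (by simp; omega)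
    (fun h => ?_) (fun h => ?_)
  · have : (2 : ℤ) ∈ (Icc 0 m).erase 3 := by simp; omega
    simp [h] at this
  · have : (3 : ℤ) ∈ ((Icc 0 m).erase 2).image (m - ·) := by
      simp only [mem_image, mem_erase, mem_Icc]
      exact ⟨m - 3, by omega, by omega⟩
    simp [← h] at this

theorem hfold_015_eq_trimmedIcc {n : ℕ} (hn : 3 ≤ n) :
    hfold {0, 1, 5} n = trimmedIcc (5 * n) ∅ {1, 2, 3, 6, 7, 11} := by
  induction n, hn using Nat.le_induction with
  | base => decide
  | succ n hn ih =>
    rw [hfold, ih]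
    ext x
    simp only [mem_add_iff_exists_sub, mem_trimmedIcc, mem_insert, mem_singleton,
      exists_eq_or_imp, exists_eq_left, notMem_empty, not_false_eq_true, true_and]
    push_cast
    omega

theorem hfold_025_eq_trimmedIcc {n : ℕ} (hn : 3 ≤ n) :
    hfold {0, 2, 5} n = trimmedIcc (5 * n) {1, 3} {1, 2, 4, 7} := by
  induction n, hn using Nat.le_induction with
  | base => decide
  | succ n hn ih =>
    rw [hfold, ih]
    ext x
    simp only [mem_add_iff_exists_sub, mem_trimmedIcc, mem_insert, mem_singleton,
      exists_eq_or_imp, exists_eq_left]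
    push_cast
    omega

theorem card_hfold_015_eq_card_hfold_025 (n : ℕ) :
    #(hfold {0, 1, 5} n) = #(hfold {0, 2, 5} n) := by
  rcases lt_or_ge n 5 with hn | hn
  · interval_cases n <;> decide
  rw [← Nat.cast_inj (R := ℤ), hfold_015_eq_trimmedIcc (by omega),
    hfold_025_eq_trimmedIcc (by omega),
    card_trimmedIcc (c := 12) (by decide) (by decide) (by norm_num) (by omega),
    card_trimmedIcc (c := 12) (by decide) (by decide) (by norm_num) (by omega)]
  simp [sub_sub]

theorem hfold_0125_eq_trimmedIcc {n : ℕ} (hn : 2 ≤ n) :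
    hfold {0, 1, 2, 5} n = trimmedIcc (5 * n) ∅ {1, 2} := by
  induction n, hn using Nat.le_induction with
  | base => decide
  | succ n hn ih =>
    rw [hfold, ih]
    ext x
    simp only [mem_add_iff_exists_sub, mem_trimmedIcc, mem_insert, mem_singleton,
      exists_eq_or_imp, exists_eq_left, notMem_empty, not_false_eq_true, true_and]
    push_cast
    omega

theorem hfold_0245_eq_trimmedIcc {n : ℕ} (hn : 2 ≤ n) :
    hfold {0, 2, 4, 5} n = trimmedIcc (5 * n) {1, 3} ∅ := by
  induction n, hn using Nat.le_induction with
  | base => decide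
  | succ n hn ih =>
    rw [hfold, ih]
    ext x
    simp only [mem_add_iff_exists_sub, mem_trimmedIcc, mem_insert, mem_singleton,
      exists_eq_or_imp, exists_eq_left, notMem_empty, not_false_eq_true, and_true]
    push_cast
    omega

theorem card_hfold_0125_eq_card_hfold_0245 (n : ℕ) :
    #(hfold {0, 1, 2, 5} n) = #(hfold {0, 2, 4, 5} n) := by
  rcases lt_or_ge n 2 with hn | hn
  · interval_cases n <;> decide
  rw [← Nat.cast_inj (R := ℤ), hfold_0125_eq_trimmedIcc hn, hfold_0245_eq_trimmedIcc hn,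
    card_trimmedIcc (c := 4) (by decide) (by decide) (by norm_num) (by omega),
    card_trimmedIcc (c := 4) (by decide) (by decide) (by norm_num) (by omega)]
  simp

set_option maxRecDepth 10000 in
theorem hfold_01268_eq_hfold_01468 {n : ℕ} (hn : 3 ≤ n) :
    hfold {0, 1, 2, 6, 8} n = hfold {0, 1, 4, 6, 8} n := by
  rw [hfold_eq_nsmul, hfold_eq_nsmul]
  refine nsmul_eq_of_nsmul_eq_of_succ_nsmul_eq ?_ ?_ hn <;>
    rw [← hfold_eq_nsmul, ← hfold_eq_nsmul] <;> decide

theorem card_hfold_01268_eq_card_hfold_01468 (n : ℕ) :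
    #(hfold {0, 1, 2, 6, 8} n) = #(hfold {0, 1, 4, 6, 8} n) := by
  rcases lt_or_ge n 3 with hn | hn
  · interval_cases n <;> decide
  rw [hfold_01268_eq_hfold_01468 hn]

theorem stmt_5 (k : ℕ) (hk : 3 ≤ k) :
    ∃ A B : Finset ℤ, A.card = k ∧ B.card = k ∧ ¬ AffinelyEquivalent A B ∧
      ∀ h : ℕ, 1 ≤ h → (hfold A h).card = (hfold B h).card := by
  obtain rfl | rfl | rfl | hk : k = 3 ∨ k = 4 ∨ k = 5 ∨ 6 ≤ k := by omega
  · refine ⟨{0, 1, 5}, {0, 2, 5}, rfl, rfl, ?_, fun h _ => card_hfold_015_eq_card_hfold_025 h⟩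
    apply not_affinelyEquivalent_of_subset_Icc (m := 5) <;> decide
  · refine ⟨{0, 1, 2, 5}, {0, 2, 4, 5}, rfl, rfl, ?_,
      fun h _ => card_hfold_0125_eq_card_hfold_0245 h⟩
    apply not_affinelyEquivalent_of_subset_Icc (m := 5) <;> decide
  · refine ⟨{0, 1, 2, 6, 8}, {0, 1, 4, 6, 8}, rfl, rfl, ?_,
      fun h _ => card_hfold_01268_eq_card_hfold_01468 h⟩
    apply not_affinelyEquivalent_of_subset_Icc (m := 8) <;> decide
  · have hcard : ∀ t ∈ Icc (0 : ℤ) k, #((Icc 0 (k : ℤ)).erase t) = k := fun t ht => by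
      rw [card_erase_of_mem ht, Int.card_Icc]
      omega
    refine ⟨(Icc 0 (k : ℤ)).erase 2, (Icc 0 (k : ℤ)).erase 3, hcard 2 (by simp; omega),
      hcard 3 (by simp; omega), not_affinelyEquivalent_erase_Icc (by omega),
      fun h _ => card_hfold_erase_Icc_eq le_rfl (by omega) (by norm_num) (by omega) h⟩
end

section
/- Let ℓ, w be positive integers with w ≥ ℓ + 1, and let A = [0,ℓ] ∪ {w}. For every positive integer h with h ≤ (w-1)/ℓ, the h-fold sumset satisfies |hA| = (h+1)(ℓh+2)/2. -/
/-!
A sum of `h` elements of `[0, l] ∪ {w}` using `i` elements of `[0, l]` and `j = h - i` copies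
of `w` ranges exactly over the interval `[j w, j w + i l]`. When `h l < w` these `h + 1`
intervals are pairwise disjoint (they are ordered by `j`), and their sizes `i l + 1`,
`0 ≤ i ≤ h`, add up to `(h + 1)(l h + 2) / 2`.
-/

open Pointwise

open Finset

lemma mem_hfold_Icc_union_singleton (l : ℕ) (w x : ℤ) (h : ℕ) :
    x ∈ hfold (Icc 0 (l : ℤ) ∪ {w}) h ↔
      ∃ i j : ℕ, i + j = h ∧ j * w ≤ x ∧ x ≤ j * w + i * l := by
  induction h generalizing x with
  | zero => simp [hfold]; omega
  | succ n ih =>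
    rw [hfold, mem_add]
    constructor
    · rintro ⟨a, ha, y, hy, rfl⟩
      obtain ⟨i, j, hij, hy₁, hy₂⟩ := (ih y).1 hy
      rcases mem_union.1 ha with ha | ha
      · rw [mem_Icc] at ha
        exact ⟨i + 1, j, by omega, by linarith, by push_cast; linarith⟩
      · rw [mem_singleton.1 ha]
        exact ⟨i, j + 1, by omega, by push_cast; linarith, by push_cast; linarith⟩
    · rintro ⟨i, j, hij, hx₁, hx₂⟩
      obtain _ | i := i
      · obtain rfl : j = n + 1 := by omega
        refine ⟨w, by simp, n * w, (ih _).2 ⟨0, n, by omega, le_rfl, by simp⟩, ?_⟩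
        push_cast at hx₁ hx₂ ⊢
        linarith
      by_cases hx : x ≤ j * w + i * l
      · exact ⟨0, by simp, x, (ih x).2 ⟨i, j, by omega, hx₁, hx⟩, zero_add x⟩
      · refine ⟨x - (j * w + i * l), ?_, j * w + i * l,
          (ih _).2 ⟨i, j, by omega, by simp; positivity, le_rfl⟩, sub_add_cancel _ _⟩
        push_cast at hx₂
        simp only [mem_union, mem_Icc]
        left
        constructor <;> linarith

lemma hfold_Icc_union_singleton (l : ℕ) (w : ℤ) (h : ℕ) :
    hfold (Icc 0 (l : ℤ) ∪ {w}) h =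
      (antidiagonal h).biUnion fun p => Icc (p.2 * w) (p.2 * w + p.1 * l) := by
  ext x
  simp only [mem_hfold_Icc_union_singleton, mem_biUnion, HasAntidiagonal.mem_antidiagonal,
    mem_Icc, Prod.exists]

lemma pairwiseDisjoint_Icc_antidiagonal (l : ℕ) (w : ℤ) (h : ℕ) (hw : (h * l : ℤ) < w) :
    ((antidiagonal h : Finset (ℕ × ℕ)) : Set (ℕ × ℕ)).PairwiseDisjoint
      fun p => Icc (p.2 * w : ℤ) (p.2 * w + p.1 * l) := by
  intro p hp q hq hpq
  simp only [mem_coe, HasAntidiagonal.mem_antidiagonal] at hp hq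
  wlog hlt : p.2 < q.2 generalizing p q
  · refine (this hpq.symm hq hp ?_).symm
    exact (Ne.symm fun h2 => hpq (Prod.ext (by omega) h2)).lt_of_le (by omega)
  have hi : (p.1 * l : ℤ) ≤ h * l := by gcongr; omega
  have hw₀ : 0 ≤ w := by linarith [show (0 : ℤ) ≤ h * l by positivity]
  have hj : ((p.2 + 1 : ℕ) * w : ℤ) ≤ q.2 * w := by gcongr; omega
  refine disjoint_left.2 fun x hx hx' => ?_
  simp only [mem_Icc] at hx hx'
  push_cast at hj
  linarith

lemma card_hfold_Icc_union_singleton (l : ℕ) (w : ℤ) (h : ℕ) (hw : (h * l : ℤ) < w) :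
    (hfold (Icc 0 (l : ℤ) ∪ {w}) h).card = ∑ i ∈ range (h + 1), (i * l + 1) := by
  rw [hfold_Icc_union_singleton, card_biUnion (pairwiseDisjoint_Icc_antidiagonal l w h hw),
    Nat.sum_antidiagonal_eq_sum_range_succ_mk]
  refine sum_congr rfl fun i _ => ?_
  simp only [Int.card_Icc]
  omega

lemma two_mul_sum_range_mul_add_one (l h : ℕ) :
    2 * ∑ i ∈ range (h + 1), (i * l + 1) = (h + 1) * (l * h + 2) := by
  have := sum_range_id_mul_two (h + 1)
  rw [sum_add_distrib, ← sum_mul, sum_const, card_range, smul_eq_mul, mul_one]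
  simp only [add_tsub_cancel_right] at this
  linear_combination l * this

theorem stmt_6_general (l w h : ℕ) (hl : 0 < l)
    (hsmall : (h : ℚ) ≤ ((w : ℚ) - 1) / l) :
    2 * (hfold (Finset.Icc (0 : ℤ) l ∪ {(w : ℤ)}) h).card = (h + 1) * (l * h + 2) := by
  have hw : (h * l : ℤ) < w := by
    rw [le_div_iff₀ (by exact_mod_cast hl)] at hsmall
    exact_mod_cast (show (h * l : ℚ) < w by linarith)
  rw [card_hfold_Icc_union_singleton l w h hw, two_mul_sum_range_mul_add_one]

theorem stmt_6 (l w h : ℕ) (hl : 0 < l) (hw : l + 1 ≤ w) (hh : 0 < h)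
    (hsmall : (h : ℚ) ≤ ((w : ℚ) - 1) / l) :
    2 * (hfold (Finset.Icc (0 : ℤ) l ∪ {(w : ℤ)}) h).card = (h + 1) * (l * h + 2) :=
  stmt_6_general l w h hl hsmall
end

section
/- Let ℓ, w be positive integers with w ≥ ℓ + 1, let A = [0,ℓ] ∪ {w}, and suppose h ≥ w/ℓ. Set j₀ = ⌊h + 1 - w/ℓ⌋. Then |hA| = j₀·w + 1 + (h - j₀)(2 + ℓ(h - j₀ + 1))/2. -/
/-!
Every element of `hA` is `j * w + s` with `0 ≤ j ≤ h` and `s ∈ (h - j)[0, ℓ] = [0, (h - j)ℓ]`,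
so `hA` is the union of the layers `[j w, j w + (h - j) ℓ]`. Their right ends increase with `j`.
Layers `j` and `j + 1` overlap while `w ≤ (h - j) ℓ`, i.e. for `j < j₀`, so layers `0, …, j₀`
fuse into the interval `[0, j₀ w + (h - j₀) ℓ]`; every later layer starts beyond the end of the
union of the previous ones. Adding the sizes `(h - j) ℓ + 1` of the layers `j > j₀` gives the formula.
-/

open Pointwise

open Finset

noncomputable def sumsetLayer (l w n j : ℤ) : Finset ℤ := Icc (j * w) (j * w + (n - j) * l)

theorem mem_sumsetLayer {l w n j x : ℤ} :
    x ∈ sumsetLayer l w n j ↔ j * w ≤ x ∧ x ≤ j * w + (n - j) * l :=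
  mem_Icc

theorem hfold_Icc_union_singleton_s7 {l : ℤ} (hl : 0 ≤ l) (w : ℤ) (n : ℕ) :
    hfold (Icc 0 l ∪ {w}) n = (Icc 0 (n : ℤ)).biUnion (sumsetLayer l w n) := by
  induction n with
  | zero =>
    ext x
    simp only [hfold, mem_singleton, Nat.cast_zero, Icc_self, singleton_biUnion, mem_sumsetLayer,
      zero_mul, sub_self, add_zero]
    omega
  | succ n ih =>
    ext x
    simp only [hfold, ih, mem_add, mem_biUnion, mem_union, mem_Icc, mem_singleton,
      mem_sumsetLayer]
    push_cast
    constructor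
    · rintro ⟨a, ha, s, ⟨j, hj, hs⟩, rfl⟩
      rcases ha with ha | rfl
      · exact ⟨j, by omega, by constructor <;> linarith⟩
      · exact ⟨j + 1, by omega, by constructor <;> linarith⟩
    · rintro ⟨j, hj, hx⟩
      rcases eq_or_lt_of_le hj.2 with rfl | hjn
      · exact ⟨w, Or.inr rfl, x - w, ⟨n, by omega, by constructor <;> linarith⟩, by ring⟩
      · refine ⟨min l (x - j * w), Or.inl ⟨by omega, min_le_left _ _⟩, x - min l (x - j * w),
          ⟨j, by omega, ?_⟩, by ring⟩
        have : 0 ≤ (n - j) * l := mul_nonneg (by omega) hl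
        rcases min_cases l (x - j * w) with ⟨hmin, hle⟩ | ⟨hmin, hlt⟩ <;> rw [hmin] <;>
          constructor <;> linarith

theorem biUnion_sumsetLayer_subset {l w n k : ℤ} (hl : 0 ≤ l) (hlw : l ≤ w) :
    (Icc 0 k).biUnion (sumsetLayer l w n) ⊆ Icc 0 (k * w + (n - k) * l) := by
  intro x hx
  obtain ⟨j, hj, hxj⟩ := mem_biUnion.1 hx
  rw [mem_Icc] at hj ⊢
  rw [mem_sumsetLayer] at hxj
  constructor <;> nlinarith

theorem biUnion_sumsetLayer_eq_Icc {l w n k : ℤ} (hl : 0 ≤ l) (hlw : l ≤ w) (hk : 0 ≤ k)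
    (hkn : k ≤ n) (hw : w ≤ (n - k + 1) * l) :
    (Icc 0 k).biUnion (sumsetLayer l w n) = Icc 0 (k * w + (n - k) * l) := by
  induction k, hk using Int.leInduction with
  | base => simp [sumsetLayer]
  | succ k _ ih =>
    have hkn' : 0 ≤ (n - (k + 1)) * l := mul_nonneg (by omega) hl
    rw [← insert_Icc_right_eq_Icc_add_one (by omega), biUnion_insert,
      ih (by omega) (by nlinarith)]
    ext x
    simp only [mem_union, mem_Icc, mem_sumsetLayer]
    constructor
    · rintro (h | h) <;> constructor <;> nlinarith
    · intro h
      by_cases hx : x ≤ k * w + (n - k) * l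
      · exact Or.inr ⟨h.1, hx⟩
      · exact Or.inl ⟨by linarith, h.2⟩

theorem card_sumsetLayer {l w n j : ℤ} (hnj : 0 ≤ (n - j) * l) :
    (#(sumsetLayer l w n j) : ℤ) = (n - j) * l + 1 := by
  rw [sumsetLayer, Int.card_Icc, Int.toNat_of_nonneg (by linarith)]
  ring

theorem card_biUnion_sumsetLayer_Icc_succ {l w n k : ℤ} (hl : 0 ≤ l) (hlw : l ≤ w) (hk : 0 ≤ k)
    (hgap : (n - k) * l < w) :
    #((Icc 0 (k + 1)).biUnion (sumsetLayer l w n)) =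
      #((Icc 0 k).biUnion (sumsetLayer l w n)) + #(sumsetLayer l w n (k + 1)) := by
  rw [← insert_Icc_right_eq_Icc_add_one (by omega), biUnion_insert, union_comm,
    card_union_of_disjoint]
  refine disjoint_left.2 fun x hx hx' => ?_
  have hx := mem_Icc.1 (biUnion_sumsetLayer_subset hl hlw hx)
  have hx' := mem_sumsetLayer.1 hx'
  linarith

-- `(k - j₀) * (2 + l * (2 * n - k - j₀ - 1))` is twice `∑ j ∈ Ioc j₀ k, ((n - j) * l + 1)`.
theorem two_mul_card_biUnion_sumsetLayer {l w n j₀ k : ℤ} (hl : 0 ≤ l) (hlw : l ≤ w)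
    (hj₀ : 0 ≤ j₀) (hj₀k : j₀ ≤ k) (hkn : k ≤ n) (hmerge : w ≤ (n - j₀ + 1) * l)
    (hgap : (n - j₀) * l < w) :
    2 * (#((Icc 0 k).biUnion (sumsetLayer l w n)) : ℤ) =
      2 * (j₀ * w + (n - j₀) * l + 1) + (k - j₀) * (2 + l * (2 * n - k - j₀ - 1)) := by
  induction k, hj₀k using Int.leInduction with
  | base =>
    rw [biUnion_sumsetLayer_eq_Icc hl hlw hj₀ hkn hmerge, Int.card_Icc,
      Int.toNat_of_nonneg (by nlinarith)]
    ring
  | succ k hk ih =>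
    have hgap' : (n - k) * l < w := by nlinarith
    rw [card_biUnion_sumsetLayer_Icc_succ hl hlw (by omega) hgap', Nat.cast_add, mul_add,
      ih (by omega), card_sumsetLayer (mul_nonneg (by omega) hl)]
    ring

theorem floor_add_one_sub_div_bounds (n w : ℤ) {l : ℤ} (hl : 0 < l) :
    (n - ⌊(n : ℚ) + 1 - w / l⌋) * l < w ∧ w ≤ (n - ⌊(n : ℚ) + 1 - w / l⌋ + 1) * l := by
  have hlq : (0 : ℚ) < l := by exact_mod_cast hl
  have h₁ := Int.floor_le ((n : ℚ) + 1 - w / l)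
  have h₂ := Int.lt_floor_add_one ((n : ℚ) + 1 - w / l)
  constructor
  · have : ((n - ⌊(n : ℚ) + 1 - w / l⌋) : ℚ) < w / l := by linarith
    exact_mod_cast (lt_div_iff₀ hlq).1 this
  · have : (w / l : ℚ) ≤ n - ⌊(n : ℚ) + 1 - w / l⌋ + 1 := by linarith
    exact_mod_cast (div_le_iff₀ hlq).1 this

theorem stmt_7_general (l w h : ℕ) (hl : 0 < l) (hw : l + 1 ≤ w)
    (hbig : (w : ℚ) / l ≤ (h : ℚ))
    (j0 : ℤ) (hj0 : j0 = ⌊(h : ℚ) + 1 - (w : ℚ) / l⌋) :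
    ((hfold (Finset.Icc (0 : ℤ) l ∪ {(w : ℤ)}) h).card : ℚ) =
      j0 * w + 1 + ((h : ℚ) - j0) * (2 + l * ((h : ℚ) - j0 + 1)) / 2 := by
  obtain ⟨hgap, hmerge⟩ := floor_add_one_sub_div_bounds h w (Int.natCast_pos.2 hl)
  simp only [Int.cast_natCast, ← hj0] at hgap hmerge
  have hj0_nonneg : 0 ≤ j0 := hj0 ▸ Int.floor_nonneg.2 (by linarith)
  have hlw : (l : ℤ) ≤ w := by omega
  have hj0_le : j0 ≤ h := by nlinarith
  have hcard := two_mul_card_biUnion_sumsetLayer (by positivity) hlw hj0_nonneg hj0_le le_rfl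
    hmerge hgap
  rw [← hfold_Icc_union_singleton_s7 (by positivity)] at hcard
  have hcardQ := congrArg (fun z : ℤ => (z : ℚ)) hcard
  push_cast at hcardQ
  linear_combination hcardQ / 2

theorem stmt_7 (l w h : ℕ) (hl : 0 < l) (hw : l + 1 ≤ w) (hh : 0 < h)
    (hbig : (w : ℚ) / l ≤ (h : ℚ))
    (j0 : ℤ) (hj0 : j0 = ⌊(h : ℚ) + 1 - (w : ℚ) / l⌋) :
    ((hfold (Finset.Icc (0 : ℤ) l ∪ {(w : ℤ)}) h).card : ℚ) =
      j0 * w + 1 + ((h : ℚ) - j0) * (2 + l * ((h : ℚ) - j0 + 1)) / 2 :=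
  stmt_7_general l w h hl hw hbig j0 hj0
end

section
/- Let w ≥ 2 be an integer and let A = {0, 1, w}. For every integer h ≥ w, the h-fold sumset satisfies |hA| = hw + 1 - (w-1)(w-2)/2. -/
open Pointwise

/-!
Every element of `h{0, 1, w}` is `i + j w` with `i + j ≤ h`. Reducing `i` modulo `w` only lowers
`i + j`, so the sumset is exactly the set of `r + q w` with `r < w` and `r + q ≤ h`, and these
representations are unique. Counting them residue by residue gives `∑_{r < w} (h + 1 - r)`.
-/

open Finset

lemma mem_hfold_zero_one_iff (w : ℤ) (h : ℕ) (x : ℤ) :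
    x ∈ hfold {0, 1, w} h ↔ ∃ i j : ℕ, i + j ≤ h ∧ x = i + j * w := by
  induction h generalizing x with
  | zero => simp [hfold]
  | succ n ih =>
    simp only [hfold, mem_add, mem_insert, mem_singleton, ih]
    constructor
    · rintro ⟨a, ha, y, ⟨i, j, hij, rfl⟩, rfl⟩
      rcases ha with rfl | rfl | rfl
      · exact ⟨i, j, by omega, by ring⟩
      · exact ⟨i + 1, j, by omega, by push_cast; ring⟩
      · exact ⟨i, j + 1, by omega, by push_cast; ring⟩
    · rintro ⟨i, j, hij, rfl⟩
      rcases i with _ | i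
      · rcases j with _ | j
        · exact ⟨0, .inl rfl, 0, ⟨0, 0, by omega, by simp⟩, by simp⟩
        · exact ⟨w, .inr (.inr rfl), _, ⟨0, j, by omega, rfl⟩, by push_cast; ring⟩
      · exact ⟨1, .inr (.inl rfl), _, ⟨i, j, by omega, rfl⟩, by push_cast; ring⟩

lemma add_mul_injOn (w : ℕ) : Set.InjOn (fun p : Σ _ : ℕ, ℕ => p.1 + p.2 * w) {p | p.1 < w} := by
  rintro ⟨r, q⟩ (hr : r < w) ⟨r', q'⟩ (hr' : r' < w) (he : r + q * w = r' + q' * w)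
  have hw : 0 < w := by omega
  obtain ⟨hq, hr⟩ :=
    (Nat.div_mod_unique (a := r + q * w) (d := q) (c := r) hw).2 ⟨by ring, hr⟩
  obtain ⟨hq', hr'⟩ :=
    (Nat.div_mod_unique (a := r' + q' * w) (d := q') (c := r') hw).2 ⟨by ring, hr'⟩
  rw [he] at hq hr
  rw [← hq, ← hr, hq', hr']

lemma hfold_zero_one_eq_image {w : ℕ} (hw : 0 < w) (h : ℕ) :
    hfold {0, 1, (w : ℤ)} h =
      ((range w).sigma fun r => range (h + 1 - r)).image fun p => ((p.1 + p.2 * w : ℕ) : ℤ) := by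
  ext x
  simp only [mem_hfold_zero_one_iff, mem_image, mem_sigma, mem_range, Sigma.exists]
  constructor
  · rintro ⟨i, j, hij, rfl⟩
    have hdiv := Nat.mod_add_div i w
    refine ⟨i % w, i / w + j, ⟨Nat.mod_lt i hw, ?_⟩, ?_⟩
    · have : i / w ≤ w * (i / w) := Nat.le_mul_of_pos_left _ hw
      omega
    · have := congrArg (Nat.cast (R := ℤ)) hdiv
      push_cast at this ⊢
      linarith
  · rintro ⟨r, q, ⟨hr, hq⟩, rfl⟩
    exact ⟨r, q, by omega, by push_cast; rfl⟩

lemma card_hfold_zero_one {w : ℕ} (hw : 0 < w) (h : ℕ) :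
    #(hfold {0, 1, (w : ℤ)} h) = ∑ r ∈ range w, (h + 1 - r) := by
  rw [hfold_zero_one_eq_image hw, card_image_of_injOn, card_sigma]
  · simp only [card_range]
  · refine Nat.cast_injective.comp_injOn ((add_mul_injOn w).mono fun p hp => ?_)
    exact mem_range.1 (mem_sigma.1 hp).1

lemma cast_sum_range_sub {K : Type*} [Field K] [CharZero K] {n w : ℕ} (hw : w ≤ n + 1) :
    ((∑ r ∈ range w, (n - r) : ℕ) : K) = w * n - w * (w - 1) / 2 := by
  induction w with
  | zero => simp
  | succ w ih =>
    rw [sum_range_succ, Nat.cast_add, ih (by omega), Nat.cast_sub (by omega)]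
    push_cast
    ring

theorem stmt_9 (w h : ℕ) (hw : 2 ≤ w) (hh : w ≤ h) :
    ((hfold {0, 1, (w : ℤ)} h).card : ℚ) =
      (h : ℚ) * w + 1 - ((w : ℚ) - 1) * ((w : ℚ) - 2) / 2 := by
  rw [card_hfold_zero_one (by omega), cast_sum_range_sub (by omega)]
  push_cast
  ring
end

section
/- Let ℓ, w be positive integers with w ≥ ℓ + 1, let A' be a nonempty subset of [0,ℓ], and let A = A' ∪ {w}. If h ≥ w/ℓ and j₀ = ⌊h + 1 - w/ℓ⌋, then |hA| ≤ j₀·w + 1 + (h - j₀)(2 + ℓ(h - j₀ + 1))/2. -/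
open Pointwise

lemma hfold_bound (l : ℕ) (A' : Finset ℤ) (hsub : A' ⊆ Finset.Icc (0 : ℤ) l) (w : ℤ) :
    ∀ h : ℕ, ∀ x ∈ hfold (A' ∪ {w}) h,
      ∃ j : ℕ, j ≤ h ∧ (j : ℤ) * w ≤ x ∧ x ≤ (j : ℤ) * w + ((h : ℤ) - j) * l := by
  intro h
  induction h with
  | zero =>
    intro x hx
    simp only [hfold, Finset.mem_singleton] at hx
    exact ⟨0, le_refl 0, by simp [hx]⟩
  | succ n ih =>
    intro x hx
    rw [hfold, Finset.mem_add] at hx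
    obtain ⟨a, ha, y, hy, rfl⟩ := hx
    obtain ⟨j, hj, h1, h2⟩ := ih y hy
    rcases Finset.mem_union.mp ha with ha' | haw
    · have hal := hsub ha'
      rw [Finset.mem_Icc] at hal
      refine ⟨j, le_trans hj (Nat.le_succ n), by linarith [hal.1], ?_⟩
      push_cast
      linarith [hal.2]
    · have haw' : a = w := by simpa using haw
      subst haw'
      refine ⟨j + 1, Nat.succ_le_succ hj, by push_cast; linarith, ?_⟩
      push_cast
      linarith

lemma sum_id_rat (m : ℕ) : ∑ k ∈ Finset.range m, (k : ℚ) = m * (m - 1) / 2 := by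
  induction m with
  | zero => simp
  | succ n ih =>
    rw [Finset.sum_range_succ, ih]
    push_cast
    ring

theorem stmt_10 (l w h : ℕ) (hl : 0 < l) (hw : l + 1 ≤ w)
    (A' : Finset ℤ) (hA' : A'.Nonempty) (hsub : A' ⊆ Finset.Icc (0 : ℤ) l)
    (hh : 0 < h) (hbig : (w : ℚ) / l ≤ (h : ℚ))
    (j0 : ℤ) (hj0 : j0 = ⌊(h : ℚ) + 1 - (w : ℚ) / l⌋) :
    ((hfold (A' ∪ {(w : ℤ)}) h).card : ℚ) ≤
      j0 * w + 1 + ((h : ℚ) - j0) * (2 + l * ((h : ℚ) - j0 + 1)) / 2 := by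
  have hl0 : (0 : ℚ) < l := by exact_mod_cast hl
  have hwl : (1 : ℚ) ≤ (w : ℚ) / l := by
    rw [le_div_iff₀ hl0]
    have : (l : ℚ) + 1 ≤ w := by exact_mod_cast hw
    linarith
  have hj0_nonneg : 0 ≤ j0 := by
    rw [hj0]
    apply Int.le_floor.mpr
    push_cast
    linarith
  have hj0_le : j0 ≤ (h : ℤ) := by
    rw [hj0]
    calc ⌊(h : ℚ) + 1 - (w : ℚ) / l⌋ ≤ ⌊(h : ℚ)⌋ := Int.floor_le_floor (by linarith)
      _ = h := by simp
  set n0 : ℕ := j0.toNat with hn0def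
  have hjn : (n0 : ℤ) = j0 := Int.toNat_of_nonneg hj0_nonneg
  have hn0h : n0 ≤ h := by
    have : (n0 : ℤ) ≤ (h : ℤ) := by rw [hjn]; exact hj0_le
    exact_mod_cast this
  set m : ℕ := h - n0 with hmdef
  have hm : (m : ℚ) = (h : ℚ) - n0 := by
    have : (m : ℤ) = (h : ℤ) - n0 := by
      rw [hmdef]; push_cast [hn0h]; ring
    exact_mod_cast this
  -- covering set
  set M : ℤ := (n0 : ℤ) * w + (m : ℤ) * l with hMdef
  set S : Finset ℤ := Finset.Icc (0 : ℤ) M ∪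
      (Finset.range m).biUnion
        (fun k => Finset.Icc (((h - k : ℕ) : ℤ) * w) (((h - k : ℕ) : ℤ) * w + (k : ℤ) * l))
    with hSdef
  have hcov : hfold (A' ∪ {(w : ℤ)}) h ⊆ S := by
    intro x hx
    obtain ⟨j, hjh, h1, h2⟩ := hfold_bound l A' hsub w h x hx
    rw [hSdef, Finset.mem_union]
    by_cases hcase : j ≤ n0
    · left
      rw [Finset.mem_Icc]
      constructor
      · have : (0 : ℤ) ≤ (j : ℤ) * w := by positivity
        linarith
      · -- x ≤ j*w + (h-j)*l ≤ n0*w + m*l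
        have hwl' : (l : ℤ) + 1 ≤ (w : ℤ) := by exact_mod_cast hw
        have hjc : (j : ℤ) ≤ n0 := by exact_mod_cast hcase
        have hml : (m : ℤ) = (h : ℤ) - n0 := by exact_mod_cast hm
        rw [hMdef, hml]
        nlinarith [h2]
    · right
      rw [Finset.mem_biUnion]
      refine ⟨h - j, ?_, ?_⟩
      · rw [Finset.mem_range]
        omega
      · have hhk : h - (h - j) = j := by omega
        rw [hhk, Finset.mem_Icc]
        have hkc : ((h - j : ℕ) : ℤ) = (h : ℤ) - j := by push_cast [hjh]; ring
        exact ⟨h1, by rw [hkc]; exact h2⟩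
  have hcard : (hfold (A' ∪ {(w : ℤ)}) h).card ≤ S.card := Finset.card_le_card hcov
  have hScard : (S.card : ℚ) ≤ (M + 1 : ℤ) + ∑ k ∈ Finset.range m, ((k : ℚ) * l + 1) := by
    have h1 : S.card ≤ (Finset.Icc (0 : ℤ) M).card +
        ((Finset.range m).biUnion
          (fun k => Finset.Icc (((h - k : ℕ) : ℤ) * w) (((h - k : ℕ) : ℤ) * w + (k : ℤ) * l))).card :=
      Finset.card_union_le _ _
    have h2 : ((Finset.range m).biUnion
          (fun k => Finset.Icc (((h - k : ℕ) : ℤ) * w) (((h - k : ℕ) : ℤ) * w + (k : ℤ) * l))).card ≤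
        ∑ k ∈ Finset.range m, (Finset.Icc (((h - k : ℕ) : ℤ) * w) (((h - k : ℕ) : ℤ) * w + (k : ℤ) * l)).card :=
      Finset.card_biUnion_le
    have h3 : (Finset.Icc (0 : ℤ) M).card = (M + 1).toNat := by
      rw [Int.card_Icc]; ring_nf
    have h4 : ∀ k ∈ Finset.range m,
        ((Finset.Icc (((h - k : ℕ) : ℤ) * w) (((h - k : ℕ) : ℤ) * w + (k : ℤ) * l)).card : ℚ)
          = (k : ℚ) * l + 1 := by
      intro k _
      rw [Int.card_Icc]
      have : ((h - k : ℕ) : ℤ) * w + (k : ℤ) * l + 1 - ((h - k : ℕ) : ℤ) * w = (k : ℤ) * l + 1 := by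
        ring
      rw [this]
      have hnn : (0 : ℤ) ≤ (k : ℤ) * l + 1 := by positivity
      have h5 : ((((k : ℤ) * l + 1).toNat : ℕ) : ℤ) = (k : ℤ) * l + 1 := Int.toNat_of_nonneg hnn
      exact_mod_cast h5
    have hM0 : (0 : ℤ) ≤ M := by positivity
    calc (S.card : ℚ) ≤ ((Finset.Icc (0 : ℤ) M).card : ℚ) +
          (((Finset.range m).biUnion _).card : ℚ) := by exact_mod_cast h1
      _ ≤ ((M + 1).toNat : ℚ) + ∑ k ∈ Finset.range m,
            ((Finset.Icc (((h - k : ℕ) : ℤ) * w) (((h - k : ℕ) : ℤ) * w + (k : ℤ) * l)).card : ℚ) := by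
          rw [h3]
          gcongr
          exact_mod_cast h2
      _ = (M + 1 : ℤ) + ∑ k ∈ Finset.range m, ((k : ℚ) * l + 1) := by
          rw [Finset.sum_congr rfl h4]
          congr 1
  have hsum : ∑ k ∈ Finset.range m, ((k : ℚ) * l + 1) = l * (m * (m - 1) / 2) + m := by
    rw [Finset.sum_add_distrib, ← Finset.sum_mul, sum_id_rat]
    simp
    ring
  have hMQ : ((M + 1 : ℤ) : ℚ) = (n0 : ℚ) * w + (m : ℚ) * l + 1 := by
    rw [hMdef]; push_cast; ring
  have hj0Q : (j0 : ℚ) = (n0 : ℚ) := by exact_mod_cast hjn.symm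
  have hfinal : ((hfold (A' ∪ {(w : ℤ)}) h).card : ℚ) ≤
      (n0 : ℚ) * w + (m : ℚ) * l + 1 + (l * (m * (m - 1) / 2) + m) := by
    calc ((hfold (A' ∪ {(w : ℤ)}) h).card : ℚ) ≤ (S.card : ℚ) := by exact_mod_cast hcard
      _ ≤ (M + 1 : ℤ) + ∑ k ∈ Finset.range m, ((k : ℚ) * l + 1) := hScard
      _ = _ := by rw [hMQ, hsum]
  rw [hj0Q, ← hm]
  calc ((hfold (A' ∪ {(w : ℤ)}) h).card : ℚ)
      ≤ (n0 : ℚ) * w + (m : ℚ) * l + 1 + (l * (m * (m - 1) / 2) + m) := hfinal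
    _ = (n0 : ℚ) * w + 1 + (m : ℚ) * (2 + l * ((m : ℚ) + 1)) / 2 := by ring
end

section
/- For all integers k ≥ 3 and h₁ ≥ 1, there exist finite sets of integers A and B with |A| = |B| = k such that |hB| = |hA| for all 1 ≤ h ≤ h₁, and |hB| = |hA| + h - h₁ (in particular |hB| > |hA|) for all h ≥ h₁ + 1. -/
open Pointwise

lemma mem_hfold {q b : ℤ} (hq : 1 ≤ q) (h : ℕ) (x : ℤ) :
    x ∈ hfold (Finset.Icc 0 q ∪ {b}) h ↔
      ∃ j : ℕ, j ≤ h ∧ (j : ℤ) * b ≤ x ∧ x ≤ (j : ℤ) * b + ((h : ℤ) - j) * q := by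
  induction h generalizing x with
  | zero =>
    simp only [hfold, Finset.mem_singleton]
    constructor
    · rintro rfl; exact ⟨0, le_refl _, by simp⟩
    · rintro ⟨j, hj, h1, h2⟩
      interval_cases j
      simp at h1 h2
      omega
  | succ n ih =>
    show x ∈ (Finset.Icc 0 q ∪ {b}) + hfold _ n ↔ _
    rw [Finset.mem_add]
    constructor
    · rintro ⟨c, hc, y, hy, rfl⟩
      rw [ih] at hy
      obtain ⟨j, hj, hy1, hy2⟩ := hy
      simp only [Finset.mem_union, Finset.mem_Icc, Finset.mem_singleton] at hc
      rcases hc with ⟨hc0, hcq⟩ | rfl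
      · refine ⟨j, by omega, by linarith, ?_⟩
        have e : ((n:ℤ) + 1 - j) * q = ((n:ℤ) - j) * q + q := by ring
        push_cast
        linarith [e]
      · refine ⟨j + 1, by omega, ?_, ?_⟩
        · push_cast; linarith
        · have e : ((n:ℤ) + 1 - (j+1)) * q = ((n:ℤ) - j) * q := by ring
          push_cast
          linarith [e]
    · rintro ⟨j, hj, h1, h2⟩
      have e : ((n:ℤ) + 1 - j) * q = ((n:ℤ) - j) * q + q := by ring
      push_cast at h2
      rcases Nat.lt_or_ge j (n+1) with hjn | hjn
      · have hjn' : (j:ℤ) ≤ n := by exact_mod_cast Nat.lt_succ_iff.mp hjn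
        have hnn : (0:ℤ) ≤ ((n:ℤ) - j) * q := mul_nonneg (by linarith) (by linarith)
        have hy : (j:ℤ) * b + ((n:ℤ) - j) * q ∈ hfold (Finset.Icc 0 q ∪ {b}) n ∨ True := Or.inr trivial
        rcases le_or_gt x ((j:ℤ) * b + ((n:ℤ) - j) * q) with hx | hx
        · refine ⟨0, ?_, x, ?_, by ring⟩
          · simp only [Finset.mem_union, Finset.mem_Icc, Finset.mem_singleton]
            left; exact ⟨le_refl _, by linarith⟩
          · rw [ih]; exact ⟨j, Nat.lt_succ_iff.mp hjn, h1, hx⟩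
        · refine ⟨x - ((j:ℤ) * b + ((n:ℤ) - j) * q), ?_, (j:ℤ) * b + ((n:ℤ) - j) * q, ?_, by ring⟩
          · simp only [Finset.mem_union, Finset.mem_Icc, Finset.mem_singleton]
            left; constructor <;> linarith
          · rw [ih]; exact ⟨j, Nat.lt_succ_iff.mp hjn, by linarith, le_refl _⟩
      · have hj' : j = n + 1 := by omega
        subst hj'
        refine ⟨b, by simp, (n:ℤ) * b, ?_, ?_⟩
        · rw [ih]
          exact ⟨n, le_refl _, le_refl _, by simp⟩
        · push_cast at h1 h2 ⊢
          linarith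

lemma hfold_eq_V {q b : ℤ} (hq : 1 ≤ q) (hb : q < b) (h : ℕ) :
    hfold (Finset.Icc 0 q ∪ {b}) h =
      ((Finset.range h).biUnion fun j =>
        Finset.Icc ((j:ℤ)*b) ((j:ℤ)*b + min (b-1) (((h:ℤ)-j)*q))) ∪ {(h:ℤ)*b} := by
  ext x
  rw [mem_hfold hq]
  simp only [Finset.mem_union, Finset.mem_biUnion, Finset.mem_range, Finset.mem_Icc,
    Finset.mem_singleton]
  constructor
  · rintro ⟨j, hj, h1, h2⟩
    have hjh : (j:ℤ) ≤ h := by exact_mod_cast hj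
    have hmono : (j:ℤ) * (b - q) ≤ (h:ℤ) * (b - q) :=
      mul_le_mul_of_nonneg_right hjh (by linarith)
    have hxh : x ≤ (h:ℤ) * b := by nlinarith [hmono]
    rcases eq_or_lt_of_le hxh with heq | hlt
    · right; exact heq
    · left
      have hx0 : 0 ≤ x := by
        have : (0:ℤ) ≤ (j:ℤ) * b := mul_nonneg (by positivity) (by linarith)
        linarith
      set m := x / b with hm
      have hbpos : 0 < b := by linarith
      have hdm : b * m + x % b = x := Int.mul_ediv_add_emod x b
      have hr0 : 0 ≤ x % b := Int.emod_nonneg x (by linarith)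
      have hrb : x % b < b := Int.emod_lt_of_pos x hbpos
      have hm0 : 0 ≤ m := Int.ediv_nonneg hx0 (by linarith)
      have hmh : m < (h:ℤ) := by
        by_contra hc
        push_neg at hc
        have : (h:ℤ) * b ≤ m * b := mul_le_mul_of_nonneg_right hc (by linarith)
        linarith
      have hjm : (j:ℤ) ≤ m := by
        by_contra hc
        push_neg at hc
        have : m + 1 ≤ (j:ℤ) := by linarith
        have : (m+1) * b ≤ (j:ℤ) * b := mul_le_mul_of_nonneg_right this (by linarith)
        nlinarith
      refine ⟨m.toNat, ?_, ?_, ?_⟩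
      · omega
      · rw [Int.toNat_of_nonneg hm0]; linarith
      · rw [Int.toNat_of_nonneg hm0]
        have hmono2 : (j:ℤ) * (b - q) ≤ m * (b - q) :=
          mul_le_mul_of_nonneg_right hjm (by linarith)
        have hle : x - m * b ≤ min (b-1) (((h:ℤ)-m)*q) := by
          apply le_min
          · linarith
          · nlinarith [hmono2]
        linarith [hle]
  · rintro (⟨j, hj, h1, h2⟩ | rfl)
    · refine ⟨j, le_of_lt hj, h1, ?_⟩
      have := min_le_right (b-1) (((h:ℤ)-j)*q)
      linarith
    · exact ⟨h, le_refl _, le_refl _, by simp⟩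

lemma card_hfold {q b : ℤ} (hq : 1 ≤ q) (hb : q < b) (h : ℕ) :
    ((hfold (Finset.Icc 0 q ∪ {b}) h).card : ℤ) =
      1 + ∑ j ∈ Finset.range h, min b (((h:ℤ) - j) * q + 1) := by
  rw [hfold_eq_V hq hb h]
  have hdisj : Disjoint ((Finset.range h).biUnion fun j =>
      Finset.Icc ((j:ℤ)*b) ((j:ℤ)*b + min (b-1) (((h:ℤ)-j)*q))) {(h:ℤ)*b} := by
    rw [Finset.disjoint_right]
    intro x hx hmem
    simp only [Finset.mem_singleton] at hx
    subst hx
    simp only [Finset.mem_biUnion, Finset.mem_range, Finset.mem_Icc] at hmem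
    obtain ⟨j, hj, h1, h2⟩ := hmem
    have hjh : (j:ℤ) + 1 ≤ h := by exact_mod_cast hj
    have : ((j:ℤ)+1) * b ≤ (h:ℤ) * b := mul_le_mul_of_nonneg_right hjh (by linarith)
    have := min_le_left (b-1) (((h:ℤ)-j)*q)
    nlinarith
  rw [Finset.card_union_of_disjoint hdisj, Finset.card_singleton]
  have hpw : ∀ j1 ∈ Finset.range h, ∀ j2 ∈ Finset.range h, j1 ≠ j2 →
      Disjoint (Finset.Icc ((j1:ℤ)*b) ((j1:ℤ)*b + min (b-1) (((h:ℤ)-j1)*q)))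
        (Finset.Icc ((j2:ℤ)*b) ((j2:ℤ)*b + min (b-1) (((h:ℤ)-j2)*q))) := by
    intro j1 _ j2 _ hne
    rw [Finset.disjoint_left]
    intro x hx1 hx2
    simp only [Finset.mem_Icc] at hx1 hx2
    have m1 := min_le_left (b-1) (((h:ℤ)-j1)*q)
    have m2 := min_le_left (b-1) (((h:ℤ)-j2)*q)
    rcases Nat.lt_or_ge j1 j2 with hlt | hge
    · have : (j1:ℤ) + 1 ≤ j2 := by exact_mod_cast hlt
      have : ((j1:ℤ)+1) * b ≤ (j2:ℤ) * b := mul_le_mul_of_nonneg_right this (by linarith)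
      nlinarith
    · have hlt : j2 < j1 := by omega
      have : (j2:ℤ) + 1 ≤ j1 := by exact_mod_cast hlt
      have : ((j2:ℤ)+1) * b ≤ (j1:ℤ) * b := mul_le_mul_of_nonneg_right this (by linarith)
      nlinarith
  rw [Finset.card_biUnion hpw]
  push_cast
  rw [add_comm]
  congr 1
  apply Finset.sum_congr rfl
  intro j hj
  simp only [Finset.mem_range] at hj
  have hjh : (j:ℤ) + 1 ≤ h := by exact_mod_cast hj
  have hnn : (0:ℤ) ≤ ((h:ℤ)-j)*q := mul_nonneg (by linarith) (by linarith)
  rw [Int.card_Icc]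
  have : ((j:ℤ)*b + min (b-1) (((h:ℤ)-j)*q) + 1 - (j:ℤ)*b) = min (b-1) (((h:ℤ)-j)*q) + 1 := by ring
  rw [this]
  have hmin0 : 0 ≤ min (b-1) (((h:ℤ)-j)*q) := le_min (by linarith) hnn
  rw [Int.toNat_of_nonneg (by linarith)]
  omega

theorem stmt_11 (k h1 : ℕ) (hk : 3 ≤ k) (hh1 : 1 ≤ h1) :
    ∃ A B : Finset ℤ, A.card = k ∧ B.card = k ∧
      (∀ h : ℕ, 1 ≤ h → h ≤ h1 → (hfold B h).card = (hfold A h).card) ∧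
      (∀ h : ℕ, h1 + 1 ≤ h →
        ((hfold B h).card : ℤ) = (hfold A h).card + h - h1 ∧
        (hfold A h).card < (hfold B h).card) := by
  set q : ℤ := (k : ℤ) - 2 with hqdef
  have hq : 1 ≤ q := by omega
  set bA : ℤ := q * h1 + 1 with hbAdef
  set bB : ℤ := q * h1 + 2 with hbBdef
  have hqh1 : q * 1 ≤ q * (h1:ℤ) := mul_le_mul_of_nonneg_left (by omega) (by linarith)
  have hbA : q < bA := by simp only [hbAdef]; linarith
  have hbB : q < bB := by simp only [hbBdef]; linarith
  refine ⟨Finset.Icc 0 q ∪ {bA}, Finset.Icc 0 q ∪ {bB}, ?_, ?_, ?_, ?_⟩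
  · rw [Finset.card_union_of_disjoint (by simp [Finset.mem_Icc]; omega), Int.card_Icc]
    simp; omega
  · rw [Finset.card_union_of_disjoint (by simp [Finset.mem_Icc]; omega), Int.card_Icc]
    simp; omega
  · intro h hh hhle
    have eA := card_hfold hq hbA h
    have eB := card_hfold hq hbB h
    have hsum : ∀ j ∈ Finset.range h, min bB (((h:ℤ) - j) * q + 1) =
        min bA (((h:ℤ) - j) * q + 1) := by
      intro j hj
      simp only [Finset.mem_range] at hj
      have h1' : ((h:ℤ) - j) ≤ (h1:ℤ) := by omega
      have hm : ((h:ℤ) - j) * q ≤ (h1:ℤ) * q := mul_le_mul_of_nonneg_right h1' (by linarith)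
      have e : (h1:ℤ) * q = q * h1 := by ring
      rw [min_eq_right (by simp only [hbBdef]; linarith),
        min_eq_right (by simp only [hbAdef]; linarith)]
    have : ((hfold (Finset.Icc 0 q ∪ {bB}) h).card : ℤ) =
        ((hfold (Finset.Icc 0 q ∪ {bA}) h).card : ℤ) := by
      rw [eA, eB, Finset.sum_congr rfl hsum]
    exact_mod_cast this
  · intro h hh
    have eA := card_hfold hq hbA h
    have eB := card_hfold hq hbB h
    have hsum : ∀ j ∈ Finset.range h, min bB (((h:ℤ) - j) * q + 1) -
        min bA (((h:ℤ) - j) * q + 1) = if j + h1 < h then (1:ℤ) else 0 := by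
      intro j hj
      simp only [Finset.mem_range] at hj
      by_cases hc : j + h1 < h
      · have h1' : (h1:ℤ) + 1 ≤ (h:ℤ) - j := by omega
        have hm : ((h1:ℤ) + 1) * q ≤ ((h:ℤ) - j) * q := mul_le_mul_of_nonneg_right h1' (by linarith)
        have e : ((h1:ℤ) + 1) * q = q * h1 + q := by ring
        rw [min_eq_left (by simp only [hbBdef]; linarith),
          min_eq_left (by simp only [hbAdef]; linarith)]
        simp [hbAdef, hbBdef, hc]
      · have h1' : ((h:ℤ) - j) ≤ (h1:ℤ) := by omega
        have hm : ((h:ℤ) - j) * q ≤ (h1:ℤ) * q := mul_le_mul_of_nonneg_right h1' (by linarith)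
        have e : (h1:ℤ) * q = q * h1 := by ring
        rw [min_eq_right (by simp only [hbBdef]; linarith),
          min_eq_right (by simp only [hbAdef]; linarith)]
        simp [hc]
    have hfilt : (Finset.range h).filter (fun j => j + h1 < h) = Finset.range (h - h1) := by
      ext j; simp only [Finset.mem_filter, Finset.mem_range]; omega
    have hkey : ((hfold (Finset.Icc 0 q ∪ {bB}) h).card : ℤ) =
        ((hfold (Finset.Icc 0 q ∪ {bA}) h).card : ℤ) + h - h1 := by
      rw [eA, eB]
      have : (∑ j ∈ Finset.range h, min bB (((h:ℤ) - j) * q + 1)) -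
          (∑ j ∈ Finset.range h, min bA (((h:ℤ) - j) * q + 1)) = (h:ℤ) - h1 := by
        rw [← Finset.sum_sub_distrib, Finset.sum_congr rfl hsum, Finset.sum_boole, hfilt]
        simp; omega
      linarith
    refine ⟨hkey, ?_⟩
    have : ((hfold (Finset.Icc 0 q ∪ {bA}) h).card : ℤ) <
        ((hfold (Finset.Icc 0 q ∪ {bB}) h).card : ℤ) := by rw [hkey]; omega
    exact_mod_cast this
end

section
/- Let k ≥ 3 and h₁ ≥ 1 be integers, set ℓ = k - 2 and w = ℓ(h₁ + 1), and let A = [0,ℓ] ∪ {w} and B = [0,ℓ] ∪ {w+1}. Then |(h₁+1)B| = |(h₁+1)A| + 1. -/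
open Pointwise

lemma hfold_formula (L c : ℤ) (hL : 0 ≤ L) (n : ℕ) :
    hfold (Finset.Icc 0 L ∪ {c}) n =
      (Finset.range (n + 1)).biUnion
        (fun j => Finset.Icc ((j : ℤ) * c) ((j : ℤ) * c + ((n - j : ℕ) : ℤ) * L)) := by
  induction n with
  | zero => simp [hfold]
  | succ n ih =>
    ext x
    simp only [hfold, ih, Finset.mem_add, Finset.mem_biUnion, Finset.mem_range,
      Finset.mem_union, Finset.mem_Icc, Finset.mem_singleton]
    constructor
    · rintro ⟨a, ha, b, ⟨j, hj, hb1, hb2⟩, rfl⟩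
      rcases ha with ⟨ha0, haL⟩ | rfl
      · refine ⟨j, by omega, by linarith, ?_⟩
        have e : ((n + 1 - j : ℕ) : ℤ) = ((n - j : ℕ) : ℤ) + 1 := by omega
        rw [e, add_mul, one_mul]; linarith
      · refine ⟨j + 1, by omega, ?_, ?_⟩
        · push_cast
          have : ((j : ℤ) + 1) * a = (j : ℤ) * a + a := by ring
          linarith
        · have e : ((n + 1 - (j + 1) : ℕ) : ℤ) = ((n - j : ℕ) : ℤ) := by omega
          push_cast [e]
          have : ((j : ℤ) + 1) * a = (j : ℤ) * a + a := by ring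
          linarith
    · rintro ⟨j, hj, h1, h2⟩
      match j with
      | 0 =>
        simp only [Nat.cast_zero, zero_mul, zero_add] at h1 h2
        have e : ((n + 1 - 0 : ℕ) : ℤ) = ((n - 0 : ℕ) : ℤ) + 1 := by omega
        rw [e, add_mul, one_mul] at h2
        rcases le_or_gt x (((n - 0 : ℕ) : ℤ) * L) with hc | hc
        · exact ⟨0, Or.inl ⟨le_refl 0, hL⟩, x, ⟨0, by omega, by simpa using h1, by simpa using hc⟩, by ring⟩
        · refine ⟨x - ((n - 0 : ℕ) : ℤ) * L, Or.inl ⟨by linarith, by linarith⟩,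
            ((n - 0 : ℕ) : ℤ) * L, ⟨0, by omega, ?_, ?_⟩, by ring⟩
          · simp
            positivity
          · simp
      | j + 1 =>
        refine ⟨c, Or.inr rfl, x - c, ⟨j, by omega, ?_, ?_⟩, by ring⟩
        · push_cast at h1
          have : ((j : ℤ) + 1) * c = (j : ℤ) * c + c := by ring
          linarith
        · have e : ((n + 1 - (j + 1) : ℕ) : ℤ) = ((n - j : ℕ) : ℤ) := by omega
          push_cast [e] at h2
          have : ((j : ℤ) + 1) * c = (j : ℤ) * c + c := by ring
          linarith

lemma Icc_disj {a b c d : ℤ} (h : b < c) : Disjoint (Finset.Icc a b) (Finset.Icc c d) := by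
  rw [Finset.disjoint_left]
  intro x hx hx'
  rw [Finset.mem_Icc] at hx hx'
  omega

lemma card_aux (n l w : ℕ) (hl1 : 1 ≤ l) (hn2 : 2 ≤ n) (hw : w = l * n) :
    ((Finset.range (n + 1)).biUnion
        (fun j => Finset.Icc ((j : ℤ) * ((w:ℤ)+1)) ((j : ℤ) * ((w:ℤ)+1) + ((n - j : ℕ) : ℤ) * l))).card
    = ((Finset.range (n + 1)).biUnion
        (fun j => Finset.Icc ((j : ℤ) * (w:ℤ)) ((j : ℤ) * (w:ℤ) + ((n - j : ℕ) : ℤ) * l))).card + 1 := by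
  have hwz : (w:ℤ) = (n:ℤ) * (l:ℤ) := by rw [hw]; push_cast; ring
  have cardIcc : ∀ (a : ℤ) (m : ℕ), (Finset.Icc a (a + (m : ℤ))).card = m + 1 := by
    intro a m; rw [Int.card_Icc]; omega
  -- B side: pairwise disjoint
  have keyB : ∀ i j : ℕ, i < j → j ≤ n →
      (i : ℤ) * ((w:ℤ)+1) + ((n - i : ℕ) : ℤ) * l < (j : ℤ) * ((w:ℤ)+1) := by
    intro i j hij hjn
    have hni : ((n - i : ℕ) : ℤ) = (n : ℤ) - i := by omega
    have hij' : (i : ℤ) + 1 ≤ j := by exact_mod_cast hij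
    have h1' : ((i:ℤ)+1) * ((w:ℤ)+1) ≤ (j:ℤ) * ((w:ℤ)+1) :=
      mul_le_mul_of_nonneg_right hij' (by positivity)
    have h2' : (0:ℤ) ≤ (i:ℤ) * l := by positivity
    nlinarith [h1', h2']
  have disjB : ∀ i ∈ Finset.range (n+1), ∀ j ∈ Finset.range (n+1), i ≠ j →
      Disjoint (Finset.Icc ((i : ℤ) * ((w:ℤ)+1)) ((i : ℤ) * ((w:ℤ)+1) + ((n - i : ℕ) : ℤ) * l))
        (Finset.Icc ((j : ℤ) * ((w:ℤ)+1)) ((j : ℤ) * ((w:ℤ)+1) + ((n - j : ℕ) : ℤ) * l)) := by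
    intro i hi j hj hne
    rw [Finset.mem_range] at hi hj
    rcases lt_or_gt_of_ne hne with h | h
    · exact Icc_disj (keyB i j h (by omega))
    · exact (Icc_disj (keyB j i h (by omega))).symm
  rw [Finset.card_biUnion disjB]
  -- A side: rewrite the biUnion
  set gA : ℕ → Finset ℤ := fun j =>
    if j = 0 then Finset.Icc 0 ((w:ℤ) - 1)
    else Finset.Icc ((j : ℤ) * (w:ℤ)) ((j : ℤ) * (w:ℤ) + ((n - j : ℕ) : ℤ) * l) with hgA
  have hAset : ((Finset.range (n + 1)).biUnion
        (fun j => Finset.Icc ((j : ℤ) * (w:ℤ)) ((j : ℤ) * (w:ℤ) + ((n - j : ℕ) : ℤ) * l)))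
      = (Finset.range (n + 1)).biUnion gA := by
    apply Finset.Subset.antisymm
    · intro x hx
      simp only [Finset.mem_biUnion, Finset.mem_range, Finset.mem_Icc] at hx
      obtain ⟨j, hj, hx1, hx2⟩ := hx
      match j with
      | 0 =>
        simp only [Nat.cast_zero, zero_mul, zero_add, Nat.sub_zero] at hx1 hx2
        rcases le_or_gt x ((w:ℤ) - 1) with hc | hc
        · refine Finset.mem_biUnion.2 ⟨0, by simp, ?_⟩
          simp [hgA, Finset.mem_Icc]
          omega
        · refine Finset.mem_biUnion.2 ⟨1, ?_, ?_⟩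
          · simp only [Finset.mem_range]; omega
          · simp only [hgA, if_neg one_ne_zero, Finset.mem_Icc, Nat.cast_one, one_mul]
            have : (0:ℤ) ≤ ((n - 1 : ℕ) : ℤ) * l := by positivity
            constructor
            · omega
            · have : x ≤ (w:ℤ) := by rw [hwz]; exact hx2
              linarith
      | j + 1 =>
        refine Finset.mem_biUnion.2 ⟨j + 1, by simpa using hj, ?_⟩
        simp only [hgA, if_neg (Nat.succ_ne_zero j), Finset.mem_Icc]
        exact ⟨hx1, hx2⟩
    · intro x hx
      simp only [Finset.mem_biUnion, Finset.mem_range] at hx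
      obtain ⟨j, hj, hxj⟩ := hx
      match j with
      | 0 =>
        simp only [hgA, if_pos rfl, Finset.mem_Icc] at hxj
        refine Finset.mem_biUnion.2 ⟨0, by simp, ?_⟩
        simp only [Finset.mem_Icc, Nat.cast_zero, zero_mul, zero_add, Nat.sub_zero]
        rw [← hwz]
        omega
      | j + 1 =>
        refine Finset.mem_biUnion.2 ⟨j + 1, by simpa using hj, ?_⟩
        simpa only [hgA, if_neg (Nat.succ_ne_zero j)] using hxj
  rw [hAset]
  -- A side disjointness
  have keyA : ∀ i j : ℕ, 1 ≤ i → i < j → j ≤ n →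
      (i : ℤ) * (w:ℤ) + ((n - i : ℕ) : ℤ) * l < (j : ℤ) * (w:ℤ) := by
    intro i j hi1 hij hjn
    have hni : ((n - i : ℕ) : ℤ) = (n : ℤ) - i := by omega
    have hij' : (i : ℤ) + 1 ≤ j := by exact_mod_cast hij
    have h1' : ((i:ℤ)+1) * (w:ℤ) ≤ (j:ℤ) * (w:ℤ) :=
      mul_le_mul_of_nonneg_right hij' (by positivity)
    have h2' : (l:ℤ) ≤ (i:ℤ) * l := by
      refine le_mul_of_one_le_left (by positivity) ?_
      exact_mod_cast hi1
    nlinarith [h1', h2']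
  have disjA : ∀ i ∈ Finset.range (n+1), ∀ j ∈ Finset.range (n+1), i ≠ j →
      Disjoint (gA i) (gA j) := by
    have key : ∀ i j : ℕ, i < j → j ≤ n → ∀ x ∈ gA i, ∀ y ∈ gA j, x < y → True := fun _ _ _ _ _ _ _ _ _ => trivial
    intro i hi j hj hne
    rw [Finset.mem_range] at hi hj
    have main : ∀ i j : ℕ, i < j → j ≤ n → Disjoint (gA i) (gA j) := by
      intro i j hij hjn
      match i with
      | 0 =>
        simp only [hgA, if_pos rfl, if_neg (by omega : j ≠ 0)]
        apply Icc_disj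
        have h1' : (1:ℤ) ≤ (j:ℤ) := by exact_mod_cast hij
        have : (w:ℤ) ≤ (j:ℤ) * w := le_mul_of_one_le_left (by positivity) h1'
        omega
      | i + 1 =>
        simp only [hgA, if_neg (Nat.succ_ne_zero i), if_neg (by omega : j ≠ 0)]
        exact Icc_disj (keyA (i+1) j (by omega) hij hjn)
    rcases lt_or_gt_of_ne hne with h | h
    · exact main i j h (by omega)
    · exact (main j i h (by omega)).symm
  rw [Finset.card_biUnion disjA]
  -- compute the sums
  have cardB : ∀ j ∈ Finset.range (n+1),
      (Finset.Icc ((j : ℤ) * ((w:ℤ)+1)) ((j : ℤ) * ((w:ℤ)+1) + ((n - j : ℕ) : ℤ) * l)).card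
        = (n - j) * l + 1 := by
    intro j hj
    have e : ((n - j : ℕ) : ℤ) * (l:ℤ) = (((n - j) * l : ℕ) : ℤ) := by push_cast; ring
    rw [e, cardIcc]
  have cardA : ∀ i ∈ Finset.range n, (gA (i+1)).card = (n - (i+1)) * l + 1 := by
    intro i hi
    simp only [hgA, if_neg (Nat.succ_ne_zero i)]
    have e : ((n - (i+1) : ℕ) : ℤ) * (l:ℤ) = (((n - (i+1)) * l : ℕ) : ℤ) := by push_cast; ring
    rw [e, cardIcc]
  have cardA0 : (gA 0).card = w := by
    simp only [hgA, if_pos rfl]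
    rw [Int.card_Icc]
    omega
  rw [Finset.sum_congr rfl cardB, Finset.sum_range_succ', Finset.sum_range_succ',
    Finset.sum_congr rfl cardA]
  rw [cardA0]
  have : (n - 0) * l = w := by simp [hw, Nat.mul_comm]
  omega


theorem stmt_12 (k h1 : ℕ) (hk : 3 ≤ k) (hh1 : 1 ≤ h1) (l w : ℕ)
    (hl : l = k - 2) (hw : w = l * (h1 + 1)) :
    (hfold (Finset.Icc (0 : ℤ) l ∪ {((w : ℤ) + 1)}) (h1 + 1)).card =
      (hfold (Finset.Icc (0 : ℤ) l ∪ {(w : ℤ)}) (h1 + 1)).card + 1 := by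
  have hl1 : 1 ≤ l := by omega
  rw [hfold_formula (l : ℤ) ((w : ℤ) + 1) (by positivity) (h1 + 1),
      hfold_formula (l : ℤ) (w : ℤ) (by positivity) (h1 + 1)]
  exact card_aux (h1 + 1) l w hl1 (by omega) hw
end

section
/- Let h₂, g, ℓ, b be positive integers with 2 ≤ h₂ < g and h₂·g^(ℓ-1) < b, and let G₀ = {1, g, g², …, g^(ℓ-1)} and G = G₀ ∪ {b}. Then G is a B_{h₂}-set: all sums of exactly h₂ not necessarily distinct elements of G are distinct, i.e., if a multiset sum of h₂ elements of G equals another such sum, the multisets coincide. -/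
open Finset

lemma digits_unique (g : ℕ) (hg : 0 < g) :
    ∀ (l : ℕ) (m n : ℕ → ℕ), (∀ i, i < l → m i < g) → (∀ i, i < l → n i < g) →
      (∑ i ∈ range l, m i * g ^ i) = (∑ i ∈ range l, n i * g ^ i) →
      ∀ i, i < l → m i = n i := by
  intro l
  induction l with
  | zero => intro m n _ _ _ i hi; omega
  | succ l ih =>
    intro m n hm hn hsum i hi
    rw [Finset.sum_range_succ' (fun i => m i * g ^ i),
        Finset.sum_range_succ' (fun i => n i * g ^ i)] at hsum
    simp only [pow_succ, pow_zero, mul_one, ← mul_assoc, ← Finset.sum_mul] at hsum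
    set A := ∑ i ∈ range l, m (i + 1) * g ^ i with hA
    set B := ∑ i ∈ range l, n (i + 1) * g ^ i with hB
    have h0 : m 0 = n 0 := by
      have h1 : (m 0 + A * g) % g = (n 0 + B * g) % g := by
        rw [Nat.add_comm (m 0), Nat.add_comm (n 0), hsum]
      rwa [Nat.add_mul_mod_self_right, Nat.add_mul_mod_self_right,
        Nat.mod_eq_of_lt (hm 0 (by omega)), Nat.mod_eq_of_lt (hn 0 (by omega))] at h1
    have hAB : A = B := by
      have : A * g = B * g := by omega
      exact Nat.eq_of_mul_eq_mul_right hg this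
    have := ih (fun i => m (i + 1)) (fun i => n (i + 1))
      (fun i hi => hm (i + 1) (by omega)) (fun i hi => hn (i + 1) (by omega)) hAB
    cases i with
    | zero => exact h0
    | succ j => exact this j (by omega)

lemma decomp (g l b : ℕ) (hg : 2 ≤ g) (hbig : ∀ i, i < l → g ^ i < b)
    (s : Multiset ℤ)
    (hsG : ∀ x ∈ s, x ∈ (Finset.range l).image (fun i => (g : ℤ) ^ i) ∪ {(b : ℤ)}) :
    s.sum = (s.count (b : ℤ)) • (b : ℤ)
        + ∑ i ∈ range l, (s.count ((g : ℤ) ^ i)) • (g : ℤ) ^ i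
    ∧ Multiset.card s = s.count (b : ℤ) + ∑ i ∈ range l, s.count ((g : ℤ) ^ i) := by
  set G : Finset ℤ := (Finset.range l).image (fun i => (g : ℤ) ^ i) ∪ {(b : ℤ)} with hGdef
  have hsub : s.toFinset ⊆ G := fun a ha => hsG a (Multiset.mem_toFinset.mp ha)
  have hzero : ∀ a ∈ G, a ∉ s.toFinset → s.count a = 0 := by
    intro a _ ha
    exact Multiset.count_eq_zero.mpr (fun h => ha (Multiset.mem_toFinset.mpr h))
  have hinj : Set.InjOn (fun i => (g : ℤ) ^ i) (Finset.range l) := fun a _ c _ hac =>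
    pow_right_injective₀ (by exact_mod_cast (by omega : 0 < g))
      (by exact_mod_cast (by omega : g ≠ 1)) hac
  have hbG : (b : ℤ) ∉ (Finset.range l).image (fun i => (g : ℤ) ^ i) := by
    intro hmem
    obtain ⟨i, hi, hgi⟩ := Finset.mem_image.mp hmem
    have := hbig i (Finset.mem_range.mp hi)
    have : ((g : ℤ) ^ i) < (b : ℤ) := by exact_mod_cast this
    omega
  have hdisj : Disjoint ((Finset.range l).image (fun i => (g : ℤ) ^ i)) {(b : ℤ)} :=
    Finset.disjoint_singleton_right.mpr hbG
  constructor
  · calc s.sum = ∑ a ∈ G, s.count a • a := Finset.sum_multiset_count_of_subset s G hsub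
      _ = ∑ a ∈ (Finset.range l).image (fun i => (g : ℤ) ^ i), s.count a • a
            + ∑ a ∈ {(b : ℤ)}, s.count a • a := by
          rw [hGdef, Finset.sum_union hdisj]
      _ = _ := by
          rw [Finset.sum_image (fun a ha c hc h => hinj ha hc h), Finset.sum_singleton,
            add_comm]
  · calc Multiset.card s = ∑ a ∈ s.toFinset, s.count a :=
          (Multiset.toFinset_sum_count_eq s).symm
      _ = ∑ a ∈ G, s.count a := Finset.sum_subset hsub (fun a haG ha => hzero a haG ha)
      _ = ∑ a ∈ (Finset.range l).image (fun i => (g : ℤ) ^ i), s.count a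
            + ∑ a ∈ {(b : ℤ)}, s.count a := by
          rw [hGdef, Finset.sum_union hdisj]
      _ = _ := by
          rw [Finset.sum_image (fun a ha c hc h => hinj ha hc h), Finset.sum_singleton,
            add_comm]

theorem stmt_15 (h2 g l b : ℕ) (hl : 0 < l) (hh2 : 2 ≤ h2) (hg : h2 < g)
    (hb : h2 * g ^ (l - 1) < b)
    (G : Finset ℤ) (hG : G = (Finset.range l).image (fun i => (g : ℤ) ^ i) ∪ {(b : ℤ)}) :
    ∀ s t : Multiset ℤ, Multiset.card s = h2 → Multiset.card t = h2 →
      (∀ x ∈ s, x ∈ G) → (∀ x ∈ t, x ∈ G) → s.sum = t.sum → s = t := by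
  intro s t hs ht hsG htG hsum
  have hg2 : 2 ≤ g := by omega
  have hbig : ∀ i, i < l → g ^ i < b := by
    intro i hi
    have h1 : g ^ i ≤ g ^ (l - 1) := Nat.pow_le_pow_right (by omega) (by omega)
    have h2' : g ^ (l - 1) ≤ h2 * g ^ (l - 1) := Nat.le_mul_of_pos_left _ (by omega)
    omega
  subst hG
  obtain ⟨hssum, hscard⟩ := decomp g l b hg2 hbig s hsG
  obtain ⟨htsum, htcard⟩ := decomp g l b hg2 hbig t htG
  set K := s.count (b : ℤ) with hK
  set K' := t.count (b : ℤ) with hK'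
  set m : ℕ → ℕ := fun i => s.count ((g : ℤ) ^ i) with hm
  set n : ℕ → ℕ := fun i => t.count ((g : ℤ) ^ i) with hn
  -- sums of the power part as naturals
  have hcast : ∀ (c : ℕ → ℕ), ∑ i ∈ Finset.range l, (c i) • (g : ℤ) ^ i
      = ((∑ i ∈ Finset.range l, c i * g ^ i : ℕ) : ℤ) := by
    intro c; push_cast; simp [nsmul_eq_mul]
  rw [hcast] at hssum htsum
  have hscard' : K + ∑ i ∈ Finset.range l, m i = h2 := by rw [← hs]; exact hscard.symm
  have htcard' : K' + ∑ i ∈ Finset.range l, n i = h2 := by rw [← ht]; exact htcard.symm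
  set Sm : ℕ := ∑ i ∈ Finset.range l, m i * g ^ i with hSm
  set Sn : ℕ := ∑ i ∈ Finset.range l, n i * g ^ i with hSn
  -- bound the power part
  have hbound : ∀ (c : ℕ → ℕ), (∑ i ∈ Finset.range l, c i) ≤ h2 →
      (∑ i ∈ Finset.range l, c i * g ^ i) < b := by
    intro c hc
    calc ∑ i ∈ Finset.range l, c i * g ^ i
        ≤ ∑ i ∈ Finset.range l, c i * g ^ (l - 1) := by
          refine Finset.sum_le_sum (fun i hi => ?_)
          exact Nat.mul_le_mul_left _ (Nat.pow_le_pow_right (by omega)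
            (by have := Finset.mem_range.mp hi; omega))
      _ = (∑ i ∈ Finset.range l, c i) * g ^ (l - 1) := by rw [Finset.sum_mul]
      _ ≤ h2 * g ^ (l - 1) := Nat.mul_le_mul_right _ hc
      _ < b := hb
  have hSmb : Sm < b := hbound m (by omega)
  have hSnb : Sn < b := hbound n (by omega)
  -- the key integer equation
  have hE : (K : ℤ) * b + Sm = (K' : ℤ) * b + Sn := by
    rw [hssum, htsum] at hsum
    simp only [nsmul_eq_mul] at hsum
    exact_mod_cast hsum
  -- K = K'
  have hKK : K = K' := by
    rcases lt_trichotomy K K' with h | h | h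
    · exfalso
      have h1 : (K : ℤ) + 1 ≤ K' := by exact_mod_cast h
      have h2' : ((K : ℤ) + 1) * b ≤ (K' : ℤ) * b := by
        apply mul_le_mul_of_nonneg_right h1 (by positivity)
      have h3 : (Sm : ℤ) < b := by exact_mod_cast hSmb
      have h4 : (0 : ℤ) ≤ Sn := by positivity
      nlinarith
    · exact h
    · exfalso
      have h1 : (K' : ℤ) + 1 ≤ K := by exact_mod_cast h
      have h2' : ((K' : ℤ) + 1) * b ≤ (K : ℤ) * b := by
        apply mul_le_mul_of_nonneg_right h1 (by positivity)
      have h3 : (Sn : ℤ) < b := by exact_mod_cast hSnb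
      have h4 : (0 : ℤ) ≤ Sm := by positivity
      nlinarith
  have hSS : Sm = Sn := by
    have : (Sm : ℤ) = Sn := by rw [hKK] at hE; linarith
    exact_mod_cast this
  -- digit uniqueness
  have hdig : ∀ i, i < l → m i = n i := by
    refine digits_unique g (by omega) l m n ?_ ?_ hSS
    · intro i hi
      have : m i ≤ ∑ j ∈ Finset.range l, m j :=
        Finset.single_le_sum (fun j _ => Nat.zero_le _) (Finset.mem_range.mpr hi)
      omega
      
    · intro i hi
      have : n i ≤ ∑ j ∈ Finset.range l, n j :=
        Finset.single_le_sum (fun j _ => Nat.zero_le _) (Finset.mem_range.mpr hi)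
      omega
  -- conclude multiset equality
  ext a
  by_cases ha : a ∈ (Finset.range l).image (fun i => (g : ℤ) ^ i) ∪ {(b : ℤ)}
  · rcases Finset.mem_union.mp ha with ha' | ha'
    · obtain ⟨i, hi, rfl⟩ := Finset.mem_image.mp ha'
      exact hdig i (Finset.mem_range.mp hi)
    · rw [Finset.mem_singleton.mp ha']
      exact hKK
  · rw [Multiset.count_eq_zero.mpr (fun h => ha (hsG a h)),
      Multiset.count_eq_zero.mpr (fun h => ha (htG a h))]
end

section
/- Let h₂, ℓ, w be positive integers with h₂·ℓ < w, let A₀ = [0,ℓ] and A = A₀ ∪ {w}. Then the h₂-fold sumset decomposes as a disjoint union: h₂A = ⋃_{j=0}^{h₂} (jA₀ + (h₂ - j)w), the intervals jA₀ + (h₂-j)w = [(h₂-j)w, (h₂-j)w + jℓ] are pairwise disjoint, and |h₂A| = Σ_{j=0}^{h₂} (jℓ + 1). -/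
open Pointwise

lemma Icc_add_Icc' (a b c d : ℤ) (h1 : a ≤ b) (h2 : c ≤ d) :
    Finset.Icc a b + Finset.Icc c d = Finset.Icc (a+c) (b+d) := by
  ext x
  simp only [Finset.mem_add, Finset.mem_Icc]
  constructor
  · rintro ⟨y, hy, z, hz, rfl⟩; omega
  · intro hx
    exact ⟨max a (x-d), by omega, x - max a (x-d), by omega, by omega⟩

lemma hfold_Icc (l : ℕ) : ∀ j, hfold (Finset.Icc (0:ℤ) l) j = Finset.Icc 0 ((j:ℤ)*l)
  | 0 => by simp [hfold]
  | j+1 => by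
    rw [show hfold (Finset.Icc (0:ℤ) l) (j+1) = _ + hfold (Finset.Icc (0:ℤ) l) j from rfl,
      hfold_Icc l j, Icc_add_Icc' _ _ _ _ (by positivity) (by positivity)]
    congr 1 <;> push_cast <;> ring

lemma decomp_s16 (A : Finset ℤ) (w : ℤ) : ∀ h : ℕ,
    hfold (A ∪ {w}) h = (Finset.range (h+1)).biUnion
      (fun j => (hfold A j).image (fun x => x + ((h:ℤ)-j)*w))
  | 0 => by
    ext x
    simp [hfold, Nat.lt_one_iff]
  | h+1 => by
    ext x
    have rec1 : ∀ B n, hfold B (n+1) = B + hfold B n := fun _ _ => rfl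
    simp only [rec1, Finset.mem_add, Finset.mem_biUnion, Finset.mem_range, Finset.mem_image,
      Finset.mem_union, Finset.mem_singleton, decomp_s16 A w h]
    constructor
    · rintro ⟨a, (ha | rfl), s, ⟨j, hj, y, hy, rfl⟩, rfl⟩
      · refine ⟨j+1, by omega, a + y, ?_, by push_cast; ring⟩
        rw [rec1]
        exact Finset.add_mem_add ha hy
      · exact ⟨j, by omega, y, hy, by push_cast; ring⟩
    · rintro ⟨j, hj, y, hy, rfl⟩
      by_cases hjh : j ≤ h
      · exact ⟨w, Or.inr rfl, y + ((h:ℤ)-j)*w, ⟨j, by omega, y, hy, rfl⟩, by push_cast; ring⟩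
      · have hj' : j = h+1 := by omega
        subst hj'
        rw [rec1] at hy
        rw [Finset.mem_add] at hy
        obtain ⟨a, ha, y', hy', rfl⟩ := hy
        exact ⟨a, Or.inl ha, y' + ((h:ℤ)-h)*w, ⟨h, by omega, y', hy', rfl⟩, by push_cast; ring⟩

theorem stmt_16 (h2 l w : ℕ) (hh2 : 0 < h2) (hl : 0 < l) (hw : h2 * l < w) :
    (hfold (Finset.Icc (0 : ℤ) l ∪ {(w : ℤ)}) h2 =
      (Finset.range (h2 + 1)).biUnion
        (fun j => (hfold (Finset.Icc (0 : ℤ) l) j).image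
          (fun x => x + ((h2 : ℤ) - j) * w))) ∧
    (∀ j ∈ Finset.range (h2 + 1),
      (hfold (Finset.Icc (0 : ℤ) l) j).image (fun x => x + ((h2 : ℤ) - j) * w) =
        Finset.Icc (((h2 : ℤ) - j) * w) (((h2 : ℤ) - j) * w + j * l)) ∧
    (∀ i ∈ Finset.range (h2 + 1), ∀ j ∈ Finset.range (h2 + 1), i ≠ j →
      Disjoint ((hfold (Finset.Icc (0 : ℤ) l) i).image (fun x => x + ((h2 : ℤ) - i) * w))
        ((hfold (Finset.Icc (0 : ℤ) l) j).image (fun x => x + ((h2 : ℤ) - j) * w))) ∧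
    (hfold (Finset.Icc (0 : ℤ) l ∪ {(w : ℤ)}) h2).card =
      ∑ j ∈ Finset.range (h2 + 1), (j * l + 1) := by
  have himg : ∀ j ∈ Finset.range (h2 + 1),
      (hfold (Finset.Icc (0 : ℤ) l) j).image (fun x => x + ((h2 : ℤ) - j) * w) =
        Finset.Icc (((h2 : ℤ) - j) * w) (((h2 : ℤ) - j) * w + j * l) := by
    intro j hj
    rw [hfold_Icc]
    ext x
    simp only [Finset.mem_image, Finset.mem_Icc]
    constructor
    · rintro ⟨y, hy, rfl⟩; omega
    · intro hx; exact ⟨x - ((h2:ℤ)-j)*w, by omega, by ring⟩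
  have hdisj : ∀ i ∈ Finset.range (h2 + 1), ∀ j ∈ Finset.range (h2 + 1), i ≠ j →
      Disjoint ((hfold (Finset.Icc (0 : ℤ) l) i).image (fun x => x + ((h2 : ℤ) - i) * w))
        ((hfold (Finset.Icc (0 : ℤ) l) j).image (fun x => x + ((h2 : ℤ) - j) * w)) := by
    have key : ∀ i j : ℕ, i < j → j ≤ h2 →
        ((h2:ℤ) - j) * w + j * l < ((h2:ℤ) - i) * w := by
      intro i j hij hjh
      have h1 : (j:ℤ) * l ≤ (h2:ℤ) * l := by
        have : (j:ℤ) ≤ h2 := by exact_mod_cast hjh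
        exact mul_le_mul_of_nonneg_right this (by positivity)
      have h2' : (h2:ℤ) * l < w := by exact_mod_cast hw
      have h3 : (w:ℤ) ≤ ((j:ℤ) - i) * w := by
        have : (1:ℤ) ≤ (j:ℤ) - i := by
          have : (i:ℤ) < j := by exact_mod_cast hij
          omega
        nlinarith [Int.ofNat_nonneg w]
      nlinarith
    intro i hi j hj hne
    simp only [Finset.mem_range] at hi hj
    rw [himg i (by simp; omega), himg j (by simp; omega), Finset.disjoint_left]
    simp only [Finset.mem_Icc]
    rcases lt_or_gt_of_ne hne with h | h
    · intro x hx; have := key i j h (by omega); omega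
    · intro x hx; have := key j i h (by omega); omega
  have hdec := decomp_s16 (Finset.Icc (0:ℤ) l) (w:ℤ) h2
  refine ⟨hdec, himg, hdisj, ?_⟩
  rw [hdec, Finset.card_biUnion (fun i hi j hj hne => hdisj i hi j hj hne)]
  apply Finset.sum_congr rfl
  intro j hj
  rw [himg j hj, Int.card_Icc]
  simp only [Finset.mem_range] at hj
  have : (((h2:ℤ) - j) * w + j * l + 1 - ((h2:ℤ) - j) * w) = (j*l+1 : ℕ) := by push_cast; ring
  rw [this, Int.toNat_natCast]
end

section
/- For A = {0,1,2,3,4,9} and B = {0,1,2,3,4,10} (i.e., A = [0,4] ∪ {9} and B = [0,4] ∪ {10}), we have |2A| = |2B| = 15, and |hB| - |hA| = h - 2 for all h ≥ 3. -/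
open Pointwise

lemma add_zero' (S : Finset ℤ) : S + ({0} : Finset ℤ) = S := by
  ext x; simp [Finset.mem_add]

lemma memA_add (S : Finset ℤ) (x : ℤ) :
    x ∈ ({0,1,2,3,4,9} : Finset ℤ) + S ↔
      x ∈ S ∨ x-1 ∈ S ∨ x-2 ∈ S ∨ x-3 ∈ S ∨ x-4 ∈ S ∨ x-9 ∈ S := by
  simp only [Finset.mem_add, Finset.mem_insert, Finset.mem_singleton]
  constructor
  · rintro ⟨y, hy, z, hz, rfl⟩
    rcases hy with rfl|rfl|rfl|rfl|rfl|rfl <;> simp [hz]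
  · rintro (h|h|h|h|h|h)
    exacts [⟨0, by tauto, x, h, by ring⟩, ⟨1, by tauto, x-1, h, by ring⟩,
      ⟨2, by tauto, x-2, h, by ring⟩, ⟨3, by tauto, x-3, h, by ring⟩,
      ⟨4, by tauto, x-4, h, by ring⟩, ⟨9, by tauto, x-9, h, by ring⟩]

lemma memB_add (S : Finset ℤ) (x : ℤ) :
    x ∈ ({0,1,2,3,4,10} : Finset ℤ) + S ↔
      x ∈ S ∨ x-1 ∈ S ∨ x-2 ∈ S ∨ x-3 ∈ S ∨ x-4 ∈ S ∨ x-10 ∈ S := by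
  simp only [Finset.mem_add, Finset.mem_insert, Finset.mem_singleton]
  constructor
  · rintro ⟨y, hy, z, hz, rfl⟩
    rcases hy with rfl|rfl|rfl|rfl|rfl|rfl <;> simp [hz]
  · rintro (h|h|h|h|h|h)
    exacts [⟨0, by tauto, x, h, by ring⟩, ⟨1, by tauto, x-1, h, by ring⟩,
      ⟨2, by tauto, x-2, h, by ring⟩, ⟨3, by tauto, x-3, h, by ring⟩,
      ⟨4, by tauto, x-4, h, by ring⟩, ⟨10, by tauto, x-10, h, by ring⟩]

lemma structA : ∀ h : ℕ, 2 ≤ h → hfold {0,1,2,3,4,9} h =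
    Finset.Icc 0 (9*(h:ℤ)-5) ∪ {9*(h:ℤ)} := by
  intro h hh
  induction h, hh using Nat.le_induction with
  | base =>
    show ({0,1,2,3,4,9} : Finset ℤ) + (({0,1,2,3,4,9} : Finset ℤ) + ({0} : Finset ℤ)) = _
    rw [add_zero']
    ext x
    simp only [memA_add, Finset.mem_union, Finset.mem_Icc, Finset.mem_singleton,
      Finset.mem_insert]
    push_cast
    omega
  | succ n hn ih =>
    show ({0,1,2,3,4,9} : Finset ℤ) + hfold {0,1,2,3,4,9} n = _
    rw [ih]
    ext x
    simp only [memA_add, Finset.mem_union, Finset.mem_Icc, Finset.mem_singleton]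
    push_cast
    omega

lemma structB : ∀ h : ℕ, 3 ≤ h → hfold {0,1,2,3,4,10} h =
    Finset.Icc 0 (10*(h:ℤ)-12) ∪ Finset.Icc (10*(h:ℤ)-10) (10*(h:ℤ)-6) ∪ {10*(h:ℤ)} := by
  intro h hh
  induction h, hh using Nat.le_induction with
  | base =>
    show ({0,1,2,3,4,10} : Finset ℤ) + (({0,1,2,3,4,10} : Finset ℤ) +
      (({0,1,2,3,4,10} : Finset ℤ) + ({0} : Finset ℤ))) = _
    rw [add_zero']
    ext x
    simp only [memB_add, Finset.mem_union, Finset.mem_Icc, Finset.mem_singleton,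
      Finset.mem_insert]
    push_cast
    omega
  | succ n hn ih =>
    show ({0,1,2,3,4,10} : Finset ℤ) + hfold {0,1,2,3,4,10} n = _
    rw [ih]
    ext x
    simp only [memB_add, Finset.mem_union, Finset.mem_Icc, Finset.mem_singleton]
    push_cast
    omega

lemma cardA : ∀ h : ℕ, 2 ≤ h → (hfold {0,1,2,3,4,9} h).card = 9*h - 3 := by
  intro h hh
  rw [structA h hh, Finset.card_union_of_disjoint, Int.card_Icc, Finset.card_singleton]
  · omega
  · simp only [Finset.disjoint_singleton_right, Finset.mem_Icc]
    omega

lemma cardB : ∀ h : ℕ, 3 ≤ h → (hfold {0,1,2,3,4,10} h).card = 10*h - 5 := by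
  intro h hh
  rw [structB h hh, Finset.card_union_of_disjoint, Finset.card_union_of_disjoint,
    Int.card_Icc, Int.card_Icc, Finset.card_singleton]
  · omega
  · rw [Finset.disjoint_left]
    intro a ha hb
    simp only [Finset.mem_Icc] at ha hb
    omega
  · simp only [Finset.disjoint_singleton_right, Finset.mem_union, Finset.mem_Icc]
    omega

lemma cardB2 : (hfold {0,1,2,3,4,10} 2).card = 15 := by
  have h2 : hfold {0,1,2,3,4,10} 2 =
      Finset.Icc (0:ℤ) 8 ∪ Finset.Icc 10 14 ∪ {20} := by
    show ({0,1,2,3,4,10} : Finset ℤ) + (({0,1,2,3,4,10} : Finset ℤ) + ({0} : Finset ℤ)) = _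
    rw [add_zero']
    ext x
    simp only [memB_add, Finset.mem_union, Finset.mem_Icc, Finset.mem_singleton,
      Finset.mem_insert]
    omega
  rw [h2, Finset.card_union_of_disjoint, Finset.card_union_of_disjoint,
    Int.card_Icc, Int.card_Icc, Finset.card_singleton]
  · rfl
  · rw [Finset.disjoint_left]
    intro a ha hb
    simp only [Finset.mem_Icc] at ha hb
    omega
  · simp only [Finset.disjoint_singleton_right, Finset.mem_union, Finset.mem_Icc]
    omega

theorem stmt_18 :
    (hfold {0, 1, 2, 3, 4, 9} 2).card = 15 ∧
    (hfold {0, 1, 2, 3, 4, 10} 2).card = 15 ∧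
    ∀ h : ℕ, 3 ≤ h →
      ((hfold {0, 1, 2, 3, 4, 10} h).card : ℤ) - (hfold {0, 1, 2, 3, 4, 9} h).card
        = (h : ℤ) - 2 := by
  refine ⟨?_, cardB2, ?_⟩
  · rw [cardA 2 (by norm_num)]
  · intro h hh
    rw [cardA h (by omega), cardB h hh]
    push_cast [Nat.cast_sub (by omega : 3 ≤ 9*h), Nat.cast_sub (by omega : 5 ≤ 10*h)]
    ring
end
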